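/- arXiv:2006.09018 — 15 statements merged into one kernel-verified Lean document; each statement's English description precedes it below -/
import Mathlib

section
/- Let n ≥ 2 and k, l be integers, and let j ∈ {0,1,2} with condition indices read mod 3. Then: (i) if (E.j) and (F1.j) both hold then (B.(j+1)) holds; (ii) if (E.j) and (F2.(−j)) both hold then (B.(j+2)) holds; (iii) if additionally none of (B.0), (B.1), (B.2) hold, then (E.j) and (F1.(j+1)) together imply (D.(j+2)), and (E.j) and (F2.(1−j)) together imply (D.(j+1)). -/
/-- `c ≡ ±n/p (mod n)`: `p` divides `n`, and `c ≡ n/p` or `c ≡ -n/p (mod n)`. -/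
def pmMod (n p c : ℤ) : Prop := p ∣ n ∧ (n ∣ (c - n / p) ∨ n ∣ (c + n / p))

/-- Conditions (B.0), (B.1), (B.2). -/
def condB (n k l : ℤ) : ZMod 3 → Prop := fun j =>
  if j = 0 then n ∣ (2 * k - l) else if j = 1 then n ∣ (2 * l - k) else n ∣ (k + l)

/-- Conditions (C.0), (C.1), (C.2). -/
def condC (n k l : ℤ) : ZMod 3 → Prop := fun j =>
  if j = 0 then pmMod n 3 l else if j = 1 then pmMod n 3 k else pmMod n 3 (k - l)

/-- Conditions (D.0), (D.1), (D.2). -/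
def condD (n k l : ℤ) : ZMod 3 → Prop := fun j =>
  if j = 0 then 2 ∣ n ∧ n ∣ (2 * k - l - n / 2)
  else if j = 1 then 2 ∣ n ∧ n ∣ (2 * l - k - n / 2)
  else 2 ∣ n ∧ n ∣ (k + l - n / 2)

/-- Conditions (E.0), (E.1), (E.2). -/
def condE (n k l : ℤ) : ZMod 3 → Prop := fun j =>
  if j = 0 then pmMod n 3 (2 * k - l) else if j = 1 then pmMod n 3 (2 * l - k)
  else pmMod n 3 (k + l)

/-- Conditions (F1.0), (F1.1), (F1.2). -/
def condF1 (n k l : ℤ) : ZMod 3 → Prop := fun j =>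
  if j = 0 then n ∣ (5 * k - l) else if j = 1 then n ∣ (5 * l - 4 * k) else n ∣ (k + 4 * l)

/-- Conditions (F2.0), (F2.1), (F2.2). -/
def condF2 (n k l : ℤ) : ZMod 3 → Prop := fun j =>
  if j = 0 then n ∣ (4 * l - 5 * k) else if j = 1 then n ∣ (4 * k + l) else n ∣ (5 * l - k)

/-!
Write `b_j` for the linear form of (B.j). Condition (E.j) gives `3 b_j ≡ 0 (mod n)`, and each
F-condition in the statement is, up to sign, `3 b_j ± b_i` or `3 b_j ± 2 b_i` for the relevant
index `i`, so (B.i) resp. `2 b_i ≡ 0` follows by a linear combination mod `n`. In the second case,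
if (B.i) fails then `n` is even and `b_i ≡ n/2`, which is (D.i).
-/

theorem pmMod.dvd_mul {n p c : ℤ} (h : pmMod n p c) : n ∣ p * c := by
  obtain ⟨hp, h | h⟩ := h
  · rw [show p * c = p * (c - n / p) + n by linear_combination Int.mul_ediv_cancel' hp]
    exact dvd_add (h.mul_left p) dvd_rfl
  · rw [show p * c = p * (c + n / p) - n by linear_combination -Int.mul_ediv_cancel' hp]
    exact dvd_sub (h.mul_left p) dvd_rfl

theorem dvd_sub_ediv_two_of_dvd_two_mul {n t : ℤ} (h : n ∣ 2 * t) (ht : ¬ n ∣ t) :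
    2 ∣ n ∧ n ∣ t - n / 2 := by
  obtain ⟨m, hm⟩ := h
  obtain ⟨c, rfl⟩ | ⟨c, rfl⟩ := Int.even_or_odd m
  · exact absurd ⟨c, by linarith⟩ ht
  · have hn : n = 2 * (t - n * c) := by linarith
    refine ⟨⟨_, hn⟩, c, ?_⟩
    rw [hn, Int.mul_ediv_cancel_left _ two_ne_zero, ← hn]
    ring

theorem ZMod.three_cases (j : ZMod 3) : j = 0 ∨ j = 1 ∨ j = 2 := by
  revert j; decide

-- (B.j) reads `formB k l j ≡ 0` and (E.j) reads `formB k l j ≡ ±n/3`.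
def formB (k l : ℤ) (j : ZMod 3) : ℤ :=
  if j = 0 then 2 * k - l else if j = 1 then 2 * l - k else k + l

section
variable {n : ℕ} {k l : ℤ} {j : ZMod 3}

theorem condB_iff : condB n k l j ↔ (n : ℤ) ∣ formB k l j := by
  unfold condB formB; split_ifs <;> rfl

theorem condD_iff : condD n k l j ↔ 2 ∣ (n : ℤ) ∧ (n : ℤ) ∣ formB k l j - n / 2 := by
  unfold condD formB; split_ifs <;> rfl

theorem condE.dvd_three_mul (h : condE n k l j) : (n : ℤ) ∣ 3 * formB k l j := by
  refine pmMod.dvd_mul ?_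
  unfold condE at h; unfold formB; split_ifs at h ⊢ <;> exact h

theorem condB_add_one_of_condF1 (h3 : (n : ℤ) ∣ 3 * formB k l j) (hF : condF1 n k l j) :
    condB n k l (j + 1) := by
  obtain rfl | rfl | rfl := j.three_cases
  all_goals
    simp +decide only [condB, condF1, formB] at *
    simp only [← ZMod.intCast_zmod_eq_zero_iff_dvd] at *
    push_cast at *
  · linear_combination -h3 + hF
  · linear_combination h3 - hF
  · linear_combination h3 - hF

theorem condB_add_two_of_condF2 (h3 : (n : ℤ) ∣ 3 * formB k l j) (hF : condF2 n k l (-j)) :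
    condB n k l (j + 2) := by
  obtain rfl | rfl | rfl := j.three_cases
  all_goals
    simp +decide only [condB, condF2, formB] at *
    simp only [← ZMod.intCast_zmod_eq_zero_iff_dvd] at *
    push_cast at *
  · linear_combination h3 + hF
  · linear_combination hF - h3
  · linear_combination h3 - hF

theorem dvd_two_mul_formB_add_two_of_condF1 (h3 : (n : ℤ) ∣ 3 * formB k l j)
    (hF : condF1 n k l (j + 1)) : (n : ℤ) ∣ 2 * formB k l (j + 2) := by
  obtain rfl | rfl | rfl := j.three_cases
  all_goals
    simp +decide only [condF1, formB] at *
    simp only [← ZMod.intCast_zmod_eq_zero_iff_dvd] at *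
    push_cast at *
  · linear_combination h3 + hF
  · linear_combination hF - h3
  · linear_combination h3 - hF

theorem dvd_two_mul_formB_add_one_of_condF2 (h3 : (n : ℤ) ∣ 3 * formB k l j)
    (hF : condF2 n k l (1 - j)) : (n : ℤ) ∣ 2 * formB k l (j + 1) := by
  obtain rfl | rfl | rfl := j.three_cases
  all_goals
    simp +decide only [condF2, formB] at *
    simp only [← ZMod.intCast_zmod_eq_zero_iff_dvd] at *
    push_cast at *
  · linear_combination hF - h3
  · linear_combination h3 - hF
  · linear_combination h3 - hF

theorem condD_of_dvd_two_mul (h : (n : ℤ) ∣ 2 * formB k l j) (hB : ¬ condB n k l j) :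
    condD n k l j :=
  condD_iff.2 <| dvd_sub_ediv_two_of_dvd_two_mul h (condB_iff.not.1 hB)

end

theorem stmt1_general (n : ℕ) (k l : ℤ) (j : ZMod 3) :
    (condE n k l j ∧ condF1 n k l j → condB n k l (j + 1)) ∧
    (condE n k l j ∧ condF2 n k l (-j) → condB n k l (j + 2)) ∧
    ((¬ condB n k l 0 ∧ ¬ condB n k l 1 ∧ ¬ condB n k l 2) →
      (condE n k l j ∧ condF1 n k l (j + 1) → condD n k l (j + 2)) ∧
      (condE n k l j ∧ condF2 n k l (1 - j) → condD n k l (j + 1))) := by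
  refine ⟨fun ⟨hE, hF⟩ => condB_add_one_of_condF1 hE.dvd_three_mul hF,
    fun ⟨hE, hF⟩ => condB_add_two_of_condF2 hE.dvd_three_mul hF, fun ⟨h0, h1, h2⟩ => ?_⟩
  have hB (i : ZMod 3) : ¬ condB n k l i := by
    obtain rfl | rfl | rfl := i.three_cases <;> assumption
  exact ⟨fun ⟨hE, hF⟩ => condD_of_dvd_two_mul
      (dvd_two_mul_formB_add_two_of_condF1 hE.dvd_three_mul hF) (hB _),
    fun ⟨hE, hF⟩ => condD_of_dvd_two_mul
      (dvd_two_mul_formB_add_one_of_condF2 hE.dvd_three_mul hF) (hB _)⟩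

theorem stmt1 (n : ℕ) (hn : 2 ≤ n) (k l : ℤ) (j : ZMod 3) :
    (condE n k l j ∧ condF1 n k l j → condB n k l (j + 1)) ∧
    (condE n k l j ∧ condF2 n k l (-j) → condB n k l (j + 2)) ∧
    ((¬ condB n k l 0 ∧ ¬ condB n k l 1 ∧ ¬ condB n k l 2) →
      (condE n k l j ∧ condF1 n k l (j + 1) → condD n k l (j + 2)) ∧
      (condE n k l j ∧ condF2 n k l (1 - j) → condD n k l (j + 1))) :=
  stmt1_general n k l j
end

section
/- Let n ≥ 2 and k, l be integers with k ≢ 0, l ≢ 0 and k ≢ l (mod n), and let j ∈ {0,1,2} with condition indices read mod 3. If (F1.j) and (F2.(−j)) both hold then (C.j) holds; and if (F1.j) and (F2.(1−j)) both hold then (B.(j+1)) holds. -/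
/-! In every case the conclusion is a difference or sum of the two hypotheses. For (C.j) that
combination is `3c` with `c` the quantity in (C.j); since `c ≢ 0`, `c` is a nonzero multiple of
`n/3` modulo `n`, hence `±n/3`. -/

lemma pmMod_three_of_dvd_three_mul {n c : ℤ} (h : n ∣ 3 * c) (hc : ¬ n ∣ c) : pmMod n 3 c := by
  obtain ⟨m, rfl⟩ : (3 : ℤ) ∣ n := by
    by_contra h3
    exact hc ((Int.prime_three.coprime_iff_not_dvd.mpr h3).symm.dvd_of_dvd_mul_left h)
  obtain ⟨t, rfl⟩ : m ∣ c := (mul_dvd_mul_iff_left three_ne_zero).mp h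
  have ht : ¬ 3 ∣ t := fun h3 => hc (by rw [mul_comm 3 m]; exact mul_dvd_mul_left m h3)
  rw [pmMod, Int.mul_ediv_cancel_left m three_ne_zero, mul_comm 3 m,
    show m * t - m = m * (t - 1) by ring, show m * t + m = m * (t + 1) by ring]
  refine ⟨dvd_mul_left 3 m, ?_⟩
  have : 3 ∣ t - 1 ∨ 3 ∣ t + 1 := by omega
  exact this.imp (mul_dvd_mul_left m) (mul_dvd_mul_left m)

theorem stmt2_general (n : ℕ) (k l : ℤ)
    (hk : ¬ (n : ℤ) ∣ k) (hl : ¬ (n : ℤ) ∣ l) (hkl : ¬ (n : ℤ) ∣ (k - l))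
    (j : ZMod 3) :
    (condF1 n k l j ∧ condF2 n k l (-j) → condC n k l j) ∧
    (condF1 n k l j ∧ condF2 n k l (1 - j) → condB n k l (j + 1)) := by
  obtain rfl | rfl | rfl : j = 0 ∨ j = 1 ∨ j = 2 := by revert j; decide
  all_goals simp +decide only [condF1, condF2, condB, condC, if_true, if_false]
  all_goals refine ⟨fun ⟨h1, h2⟩ => ?_, fun ⟨h1, h2⟩ => ?_⟩
  · exact pmMod_three_of_dvd_three_mul
      (by rw [show 3 * l = (5 * k - l) + (4 * l - 5 * k) by ring]; exact dvd_add h1 h2) hl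
  · rw [show 2 * l - k = (4 * k + l) - (5 * k - l) by ring]; exact dvd_sub h2 h1
  · exact pmMod_three_of_dvd_three_mul
      (by rw [show 3 * k = (5 * l - k) - (5 * l - 4 * k) by ring]; exact dvd_sub h2 h1) hk
  · rw [show k + l = (5 * l - 4 * k) - (4 * l - 5 * k) by ring]; exact dvd_sub h1 h2
  · exact pmMod_three_of_dvd_three_mul
      (by rw [show 3 * (k - l) = (4 * k + l) - (k + 4 * l) by ring]; exact dvd_sub h2 h1) hkl
  · rw [show 2 * k - l = (k + 4 * l) - (5 * l - k) by ring]; exact dvd_sub h1 h2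

theorem stmt2 (n : ℕ) (hn : 2 ≤ n) (k l : ℤ)
    (hk : ¬ (n : ℤ) ∣ k) (hl : ¬ (n : ℤ) ∣ l) (hkl : ¬ (n : ℤ) ∣ (k - l))
    (j : ZMod 3) :
    (condF1 n k l j ∧ condF2 n k l (-j) → condC n k l j) ∧
    (condF1 n k l j ∧ condF2 n k l (1 - j) → condB n k l (j + 1)) :=
  stmt2_general n k l hk hl hkl j
end

section
/- Let n ≥ 2 and k, l be integers with k ≢ 0, l ≢ 0 and k ≢ l (mod n). If none of the six conditions (B.0), (B.1), (B.2), (C.0), (C.1), (C.2) hold, then at most one of the three conditions (E.0), (E.1), (E.2) holds. -/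
private lemma key3 (m a : ℤ) (h : m ∣ a) :
    (3 * m) ∣ a ∨ (3 * m) ∣ (a - m) ∨ (3 * m) ∣ (a + m) := by
  obtain ⟨c, rfl⟩ := h
  have h3 : c % 3 = 0 ∨ c % 3 = 1 ∨ c % 3 = 2 := by omega
  rcases h3 with h | h | h
  · exact Or.inl ⟨c / 3, by have : c = 3 * (c / 3) := by omega
                            linear_combination m * this⟩
  · exact Or.inr (Or.inl ⟨c / 3, by have : c = 3 * (c / 3) + 1 := by omega
                                    linear_combination m * this⟩)
  · exact Or.inr (Or.inr ⟨c / 3 + 1, by have : c = 3 * (c / 3) + 2 := by omega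
                                        linear_combination m * this⟩)

private lemma cancel3 {x y : ℤ} (h : 3 * x = 3 * y) : x = y :=
  mul_left_cancel₀ (by norm_num : (3 : ℤ) ≠ 0) h

theorem stmt3 (n : ℕ) (hn : 2 ≤ n) (k l : ℤ)
    (hk : ¬ (n : ℤ) ∣ k) (hl : ¬ (n : ℤ) ∣ l) (hkl : ¬ (n : ℤ) ∣ (k - l))
    (hB : ∀ j : ZMod 3, ¬ condB n k l j)
    (hC : ∀ j : ZMod 3, ¬ condC n k l j) :
    ¬ (condE n k l 0 ∧ condE n k l 1) ∧ ¬ (condE n k l 0 ∧ condE n k l 2) ∧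
      ¬ (condE n k l 1 ∧ condE n k l 2) := by
  have hB0 := hB 0; have hB1 := hB 1; have hB2 := hB 2
  have hC0 := hC 0; have hC1 := hC 1; have hC2 := hC 2
  simp only [condB, condC, condE, show (0 : ZMod 3) = 0 from rfl,
    show (1 : ZMod 3) ≠ 0 by decide, show (2 : ZMod 3) ≠ 0 by decide,
    show (1 : ZMod 3) = 1 from rfl, show (2 : ZMod 3) ≠ 1 by decide,
    ite_true, ite_false, if_neg, if_pos] at *
  refine ⟨?_, ?_, ?_⟩ <;> rintro ⟨⟨h3, hE⟩, ⟨-, hE'⟩⟩ <;>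
    obtain ⟨m, hm⟩ := h3 <;>
    have hdiv : (n : ℤ) / 3 = m := by omega
  · -- E0 ∧ E1
    rw [hdiv, hm] at hE hE'
    rcases hE with ⟨a, ha⟩ | ⟨a, ha⟩ <;> rcases hE' with ⟨b, hb⟩ | ⟨b, hb⟩
    · have hmkl : m ∣ (k - l) :=
        ⟨a - b, cancel3 (by linear_combination ha - hb)⟩
      rcases key3 m (k - l) hmkl with h | h | h
      · exact hkl (hm ▸ h)
      · exact hC2 ⟨⟨m, hm⟩, Or.inl (by rw [hdiv]; exact hm ▸ h)⟩
      · exact hC2 ⟨⟨m, hm⟩, Or.inr (by rw [hdiv]; exact hm ▸ h)⟩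
    · exact hB2 ⟨a + b, by rw [hm]; linear_combination ha + hb⟩
    · exact hB2 ⟨a + b, by rw [hm]; linear_combination ha + hb⟩
    · have hmkl : m ∣ (k - l) :=
        ⟨a - b, cancel3 (by linear_combination ha - hb)⟩
      rcases key3 m (k - l) hmkl with h | h | h
      · exact hkl (hm ▸ h)
      · exact hC2 ⟨⟨m, hm⟩, Or.inl (by rw [hdiv]; exact hm ▸ h)⟩
      · exact hC2 ⟨⟨m, hm⟩, Or.inr (by rw [hdiv]; exact hm ▸ h)⟩
  · -- E0 ∧ E2
    rw [hdiv, hm] at hE hE'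
    rcases hE with ⟨a, ha⟩ | ⟨a, ha⟩ <;> rcases hE' with ⟨b, hb⟩ | ⟨b, hb⟩
    · exact hB1 ⟨b - a, by rw [hm]; linear_combination hb - ha⟩
    · have hmk : m ∣ k := ⟨a + b, cancel3 (by linear_combination ha + hb)⟩
      rcases key3 m k hmk with h | h | h
      · exact hk (hm ▸ h)
      · exact hC1 ⟨⟨m, hm⟩, Or.inl (by rw [hdiv]; exact hm ▸ h)⟩
      · exact hC1 ⟨⟨m, hm⟩, Or.inr (by rw [hdiv]; exact hm ▸ h)⟩
    · have hmk : m ∣ k := ⟨a + b, cancel3 (by linear_combination ha + hb)⟩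
      rcases key3 m k hmk with h | h | h
      · exact hk (hm ▸ h)
      · exact hC1 ⟨⟨m, hm⟩, Or.inl (by rw [hdiv]; exact hm ▸ h)⟩
      · exact hC1 ⟨⟨m, hm⟩, Or.inr (by rw [hdiv]; exact hm ▸ h)⟩
    · exact hB1 ⟨b - a, by rw [hm]; linear_combination hb - ha⟩
  · -- E1 ∧ E2
    rw [hdiv, hm] at hE hE'
    rcases hE with ⟨a, ha⟩ | ⟨a, ha⟩ <;> rcases hE' with ⟨b, hb⟩ | ⟨b, hb⟩
    · exact hB0 ⟨b - a, by rw [hm]; linear_combination hb - ha⟩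
    · have hml : m ∣ l := ⟨a + b, cancel3 (by linear_combination ha + hb)⟩
      rcases key3 m l hml with h | h | h
      · exact hl (hm ▸ h)
      · exact hC0 ⟨⟨m, hm⟩, Or.inl (by rw [hdiv]; exact hm ▸ h)⟩
      · exact hC0 ⟨⟨m, hm⟩, Or.inr (by rw [hdiv]; exact hm ▸ h)⟩
    · have hml : m ∣ l := ⟨a + b, cancel3 (by linear_combination ha + hb)⟩
      rcases key3 m l hml with h | h | h
      · exact hl (hm ▸ h)
      · exact hC0 ⟨⟨m, hm⟩, Or.inl (by rw [hdiv]; exact hm ▸ h)⟩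
      · exact hC0 ⟨⟨m, hm⟩, Or.inr (by rw [hdiv]; exact hm ▸ h)⟩
    · exact hB0 ⟨b - a, by rw [hm]; linear_combination hb - ha⟩
end

section
/- Let n ≥ 2 and k, l be integers with gcd(n, k, l) = 1 such that none of (B.0), (B.1), (B.2) hold. If at least two of the conditions (F1.0), (F1.1), (F1.2) hold, then all three hold, l ≡ 5k and k ≡ −4l (mod n), 21l ≡ 0 (mod n), and n = 7 or n = 21. Similarly, if at least two of the conditions (F2.0), (F2.1), (F2.2) hold, then all three hold, k ≡ 5l and l ≡ −4k (mod n), 21k ≡ 0 (mod n), and n = 7 or n = 21. -/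
private lemma dcomb {n a b : ℤ} (ha : n ∣ a) (hb : n ∣ b) (x y c : ℤ)
    (h : c = x * a + y * b) : n ∣ c :=
  h ▸ dvd_add (ha.mul_left x) (hb.mul_left y)

private lemma auxF (n : ℕ) (hn : 2 ≤ n) (k l : ℤ)
    (hg : Int.gcd (n : ℤ) ((Int.gcd k l : ℤ)) = 1)
    (hB0 : ¬ (n : ℤ) ∣ (2 * k - l))
    (ha : (n : ℤ) ∣ (5 * k - l)) (hb : (n : ℤ) ∣ (5 * l - 4 * k)) :
    (n : ℤ) ∣ (k + 4 * l) ∧ (n : ℤ) ∣ (l - 5 * k) ∧ (n : ℤ) ∣ (21 * l) ∧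
      (n : ℤ) ∣ (21 * k) ∧ (n = 7 ∨ n = 21) := by
  have hc : (n : ℤ) ∣ (k + 4 * l) := dcomb ha hb 1 1 _ (by ring)
  have hl5 : (n : ℤ) ∣ (l - 5 * k) := dcomb ha hb (-1) 0 _ (by ring)
  have h21l : (n : ℤ) ∣ (21 * l) := dcomb hc hb 4 1 _ (by ring)
  have h21k : (n : ℤ) ∣ (21 * k) := dcomb ha hb 5 1 _ (by ring)
  refine ⟨hc, hl5, h21l, h21k, ?_⟩
  have hcop : IsCoprime (n : ℤ) ((Int.gcd k l : ℤ)) := Int.isCoprime_iff_gcd_eq_one.mpr hg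
  have h21g : (n : ℤ) ∣ 21 * (Int.gcd k l : ℤ) := by
    rw [Int.gcd_eq_gcd_ab k l]
    exact dcomb h21k h21l (Int.gcdA k l) (Int.gcdB k l) _ (by ring)
  have h21 : (n : ℤ) ∣ 21 := hcop.dvd_of_dvd_mul_right h21g
  have hn21 : n ∣ 21 := by exact_mod_cast h21
  have hne3 : n ≠ 3 := by
    rintro rfl
    exact hB0 (dcomb ha (dvd_refl (3 : ℤ)) 1 (-k) _ (by norm_num; ring))
  have hle : n ≤ 21 := Nat.le_of_dvd (by norm_num) hn21
  interval_cases n <;> omega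

theorem stmt4 (n : ℕ) (hn : 2 ≤ n) (k l : ℤ)
    (hgcd : Int.gcd (n : ℤ) ((Int.gcd k l : ℤ)) = 1)
    (hB : ∀ j : ZMod 3, ¬ condB n k l j) :
    (((condF1 n k l 0 ∧ condF1 n k l 1) ∨ (condF1 n k l 0 ∧ condF1 n k l 2) ∨
        (condF1 n k l 1 ∧ condF1 n k l 2)) →
      (condF1 n k l 0 ∧ condF1 n k l 1 ∧ condF1 n k l 2) ∧
        (n : ℤ) ∣ (l - 5 * k) ∧ (n : ℤ) ∣ (k + 4 * l) ∧ (n : ℤ) ∣ (21 * l) ∧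
        (n = 7 ∨ n = 21)) ∧
    (((condF2 n k l 0 ∧ condF2 n k l 1) ∨ (condF2 n k l 0 ∧ condF2 n k l 2) ∨
        (condF2 n k l 1 ∧ condF2 n k l 2)) →
      (condF2 n k l 0 ∧ condF2 n k l 1 ∧ condF2 n k l 2) ∧
        (n : ℤ) ∣ (k - 5 * l) ∧ (n : ℤ) ∣ (l + 4 * k) ∧ (n : ℤ) ∣ (21 * k) ∧
        (n = 7 ∨ n = 21)) := by
  have hB0 := hB 0
  have hB1 := hB 1
  simp only [condB, if_pos rfl] at hB0
  have hB1' : ¬ (n : ℤ) ∣ (2 * l - k) := by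
    simpa [condB] using hB1
  have hgcd' : Int.gcd (n : ℤ) ((Int.gcd l k : ℤ)) = 1 := by
    rwa [Int.gcd_comm l k]
  simp only [condF1, condF2, if_pos rfl]
  norm_num
  constructor
  · rintro (⟨h0, h1⟩ | ⟨h0, h2⟩ | ⟨h1, h2⟩)
    · obtain ⟨hc, hl5, h21l, h21k, hn'⟩ := auxF n hn k l hgcd hB0 h0 h1
      exact ⟨⟨h0, h1, hc⟩, hl5, hc, h21l, hn'⟩
    · have h1 : (n : ℤ) ∣ (5 * l - 4 * k) := dcomb h0 h2 (-1) 1 _ (by ring)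
      obtain ⟨hc, hl5, h21l, h21k, hn'⟩ := auxF n hn k l hgcd hB0 h0 h1
      exact ⟨⟨h0, h1, hc⟩, hl5, hc, h21l, hn'⟩
    · have h0 : (n : ℤ) ∣ (5 * k - l) := dcomb h1 h2 (-1) 1 _ (by ring)
      obtain ⟨hc, hl5, h21l, h21k, hn'⟩ := auxF n hn k l hgcd hB0 h0 h1
      exact ⟨⟨h0, h1, hc⟩, hl5, hc, h21l, hn'⟩
  · rintro (⟨h0, h1⟩ | ⟨h0, h2⟩ | ⟨h1, h2⟩)
    · have ha : (n : ℤ) ∣ (5 * l - k) := dcomb h0 h1 1 1 _ (by ring)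
      have hb : (n : ℤ) ∣ (5 * k - 4 * l) := dcomb h0 h1 (-1) 0 _ (by ring)
      obtain ⟨hc, hl5, h21k, h21l, hn'⟩ := auxF n hn l k hgcd' hB1' ha hb
      exact ⟨⟨h0, h1, ha⟩, dcomb hl5 hl5 1 0 _ (by ring),
        dcomb hc hc 1 0 _ (by ring), h21k, hn'⟩
    · have ha := h2
      have hb : (n : ℤ) ∣ (5 * k - 4 * l) := dcomb h0 h0 (-1) 0 _ (by ring)
      obtain ⟨hc, hl5, h21k, h21l, hn'⟩ := auxF n hn l k hgcd' hB1' ha hb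
      exact ⟨⟨h0, dcomb hc hc 1 0 _ (by ring), ha⟩, dcomb hl5 hl5 1 0 _ (by ring),
        dcomb hc hc 1 0 _ (by ring), h21k, hn'⟩
    · have ha := h2
      have hb : (n : ℤ) ∣ (5 * k - 4 * l) := dcomb h1 h2 1 (-1) _ (by ring)
      obtain ⟨hc, hl5, h21k, h21l, hn'⟩ := auxF n hn l k hgcd' hB1' ha hb
      exact ⟨⟨dcomb hb hb (-1) 0 _ (by ring), h1, ha⟩, dcomb hl5 hl5 1 0 _ (by ring),
        dcomb hc hc 1 0 _ (by ring), h21k, hn'⟩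
end

section
/- Let n ≥ 2 and k, l be integers with gcd(n, k, l) = 1 such that none of the nine conditions (B.0), (B.1), (B.2), (C.0), (C.1), (C.2), (D.0), (D.1), (D.2) hold. If for some j ∈ {0,1,2} both (F1.j) and (F2.(2−j)) hold (condition indices read mod 3), then n = 8 or n = 24. -/
/-!
In each of the three cases the two congruences (F1.j), (F2.(2−j)) make one of `k, l`, call it
`u`, determine the other modulo `n` (`l ≡ 5k`, `l ≡ −4k`, `k ≡ −4l` respectively) and force
`24u ≡ 0`. Since `gcd(n, k, l) = 1`, `u` is a unit modulo `n`, so `n ∣ 24`. In terms of `u`, the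
conditions (B), (D), (C) at the matching index say `6u ≡ 0`, `6u ≡ n/2`, `4u ≡ ±n/3`; for `u`
a unit these hold for `n ∣ 6`, `n = 4` and `n = 12` respectively, leaving `n = 8` and `n = 24`.
-/

theorem isCoprime_of_gcd_gcd_eq_one_of_dvd_sub_mul {n k l c : ℤ}
    (hgcd : Int.gcd n (Int.gcd k l) = 1) (hl : n ∣ l - c * k) : IsCoprime n k := by
  rw [Int.isCoprime_iff_gcd_eq_one]
  have hn : (Int.gcd n k : ℤ) ∣ n := Int.gcd_dvd_left n k
  have hk : (Int.gcd n k : ℤ) ∣ k := Int.gcd_dvd_right n k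
  have hl : (Int.gcd n k : ℤ) ∣ l := by
    simpa using (hn.trans hl).add (hk.mul_left c)
  have hone := Int.dvd_coe_gcd hn (Int.dvd_coe_gcd hk hl)
  rw [hgcd] at hone
  exact Nat.dvd_one.mp (Int.natCast_dvd_natCast.mp hone)

theorem eq_eight_or_eq_twentyFour_of_isCoprime {n : ℕ} {u b c : ℤ}
    (hu : IsCoprime (n : ℤ) u) (h24 : (n : ℤ) ∣ 24 * u)
    (hb : (n : ℤ) ∣ b - 6 * u) (hc : (n : ℤ) ∣ c + 4 * u)
    (hB : ¬ (n : ℤ) ∣ b) (hD : ¬ (2 ∣ (n : ℤ) ∧ (n : ℤ) ∣ b - n / 2))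
    (hC : ¬ pmMod n 3 c) : n = 8 ∨ n = 24 := by
  have hdvd : (n : ℤ) ∣ 24 := hu.dvd_of_dvd_mul_right h24
  replace hdvd : n ∣ 24 := by exact_mod_cast hdvd
  have h2 : (2 : ℤ) ∣ n → ¬ 2 ∣ u := fun h2n h2u => by
    simpa [Int.isUnit_iff] using hu.isUnit_of_dvd' h2n h2u
  have h3 : (3 : ℤ) ∣ n → ¬ 3 ∣ u := fun h3n h3u => by
    simpa [Int.isUnit_iff] using hu.isUnit_of_dvd' h3n h3u
  have hle : n ≤ 24 := Nat.le_of_dvd (by norm_num) hdvd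
  unfold pmMod at hC
  interval_cases n <;> omega

theorem stmt5_general (n : ℕ) (k l : ℤ)
    (hgcd : Int.gcd (n : ℤ) ((Int.gcd k l : ℤ)) = 1)
    (hB : ∀ j : ZMod 3, ¬ condB n k l j)
    (hC : ∀ j : ZMod 3, ¬ condC n k l j)
    (hD : ∀ j : ZMod 3, ¬ condD n k l j)
    (h : ∃ j : ZMod 3, condF1 n k l j ∧ condF2 n k l (2 - j)) :
    n = 8 ∨ n = 24 := by
  obtain ⟨j, hF1, hF2⟩ := h
  fin_cases j
  · have hF1 : (n : ℤ) ∣ 5 * k - l := hF1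
    have hF2 : (n : ℤ) ∣ 5 * l - k := hF2
    refine eq_eight_or_eq_twentyFour_of_isCoprime (u := k)
      (isCoprime_of_gcd_gcd_eq_one_of_dvd_sub_mul (c := 5) hgcd (dvd_sub_comm.mp hF1))
      ?_ ?_ ?_ (hB 2) (hD 2) (hC 2)
    · rw [show 24 * k = 5 * (5 * k - l) + 1 * (5 * l - k) by ring]
      exact hF1.linear_comb hF2 5 1
    · rw [show k + l - 6 * k = -(5 * k - l) by ring]
      exact hF1.neg_right
    · rwa [show k - l + 4 * k = 5 * k - l by ring]
  · have hF1 : (n : ℤ) ∣ 5 * l - 4 * k := hF1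
    have hF2 : (n : ℤ) ∣ 4 * k + l := hF2
    refine eq_eight_or_eq_twentyFour_of_isCoprime (u := k)
      (isCoprime_of_gcd_gcd_eq_one_of_dvd_sub_mul (c := -4) hgcd
        (by rwa [show l - -4 * k = 4 * k + l by ring]))
      ?_ ?_ ?_ (hB 0) (hD 0) (hC 0)
    · rw [show 24 * k = 5 * (4 * k + l) + -1 * (5 * l - 4 * k) by ring]
      exact hF2.linear_comb hF1 5 (-1)
    · rw [show 2 * k - l - 6 * k = -(4 * k + l) by ring]
      exact hF2.neg_right
    · rwa [show l + 4 * k = 4 * k + l by ring]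
  · have hF1 : (n : ℤ) ∣ k + 4 * l := hF1
    have hF2 : (n : ℤ) ∣ 4 * l - 5 * k := hF2
    refine eq_eight_or_eq_twentyFour_of_isCoprime (u := l)
      (isCoprime_of_gcd_gcd_eq_one_of_dvd_sub_mul (k := l) (l := k) (c := -4)
        (by rwa [Int.gcd_comm l k])
        (by rwa [show k - -4 * l = k + 4 * l by ring]))
      ?_ ?_ ?_ (hB 1) (hD 1) (hC 1)
    · rw [show 24 * l = 5 * (k + 4 * l) + 1 * (4 * l - 5 * k) by ring]
      exact hF1.linear_comb hF2 5 1
    · rw [show 2 * l - k - 6 * l = -(k + 4 * l) by ring]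
      exact hF1.neg_right
    · exact hF1

theorem stmt5 (n : ℕ) (hn : 2 ≤ n) (k l : ℤ)
    (hgcd : Int.gcd (n : ℤ) ((Int.gcd k l : ℤ)) = 1)
    (hB : ∀ j : ZMod 3, ¬ condB n k l j)
    (hC : ∀ j : ZMod 3, ¬ condC n k l j)
    (hD : ∀ j : ZMod 3, ¬ condD n k l j)
    (h : ∃ j : ZMod 3, condF1 n k l j ∧ condF2 n k l (2 - j)) :
    n = 8 ∨ n = 24 :=
  stmt5_general n k l hgcd hB hC hD h
end

section
/- Let n ≥ 2 and k, l be integers with gcd(n, k, l) = 1 such that none of (B.0), (B.1), (B.2) hold. If for some j ∈ {0,1,2} (condition indices read mod 3) either both (E.j) and (F1.(j+2)) hold, or both (E.j) and (F2.(2−j)) hold, then n = 27. -/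
namespace pmMod

variable {n p x : ℤ}

theorem dvd_mul_s6 (h : pmMod n p x) : n ∣ p * x := by
  obtain ⟨hp, hx | hx⟩ := h
  · simpa [mul_sub, Int.mul_ediv_cancel' hp] using (dvd_sub (hx.mul_left p) dvd_rfl)
  · simpa [mul_add, Int.mul_ediv_cancel' hp] using (dvd_sub (hx.mul_left p) dvd_rfl)

theorem dvd_of_dvd_mul {c : ℤ} (hn : n ≠ 0) (h : pmMod n p x) (hc : n ∣ c * x) : p ∣ c := by
  obtain ⟨hp, hx⟩ := h
  have hq : n / p ≠ 0 := fun h0 => hn (by rw [← Int.mul_ediv_cancel' hp, h0, mul_zero])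
  rw [← mul_dvd_mul_iff_right hq, Int.mul_ediv_cancel' hp]
  rcases hx with hx | hx
  · simpa [mul_sub] using dvd_sub hc (hx.mul_left c)
  · simpa [mul_add] using dvd_sub (hx.mul_left c) hc

end pmMod

theorem Int.dvd_of_dvd_mul_of_gcd_gcd_eq_one {n c k l : ℤ} (hkl : Int.gcd n (Int.gcd k l) = 1)
    (hk : n ∣ c * k) (hl : n ∣ c * l) : n ∣ c := by
  have h : n ∣ c * Int.gcd k l := by
    rw [Int.gcd_eq_gcd_ab, mul_add, ← mul_assoc, ← mul_assoc]
    exact dvd_add (hk.mul_right _) (hl.mul_right _)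
  exact (Int.isCoprime_iff_gcd_eq_one.mpr hkl).dvd_of_dvd_mul_right h

theorem Nat.eq_27_of_dvd_27_of_not_dvd_9 {n : ℕ} (h27 : n ∣ 27) (h9 : ¬ n ∣ 9) : n = 27 := by
  obtain ⟨i, hi, rfl⟩ := (Nat.dvd_prime_pow Nat.prime_three).mp (show n ∣ 3 ^ 3 from h27)
  interval_cases i <;> simp_all

theorem eq_27_of_pmMod_of_dvd {n : ℕ} {k l x y : ℤ}
    (hkl : Int.gcd n (Int.gcd k l) = 1) (hx : pmMod n 3 x) (hy : (n : ℤ) ∣ y) (p q p' q' : ℤ)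
    (hk : 9 * k = p * x + q * y) (hl : 9 * l = p' * x + q' * y) (hp : ¬ 3 ∣ p) : n = 27 := by
  have h3x := hx.dvd_mul_s6
  have h27 : (n : ℤ) ∣ 27 := by
    refine Int.dvd_of_dvd_mul_of_gcd_gcd_eq_one hkl ?_ ?_
    · rw [show 27 * k = p * (3 * x) + 3 * q * y by linear_combination 3 * hk]
      exact dvd_add (h3x.mul_left p) (hy.mul_left (3 * q))
    · rw [show 27 * l = p' * (3 * x) + 3 * q' * y by linear_combination 3 * hl]
      exact dvd_add (h3x.mul_left p') (hy.mul_left (3 * q'))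
  have h9 : ¬ (n : ℤ) ∣ 9 := by
    intro h9
    have hn : (n : ℤ) ≠ 0 := by rintro h0; simp [h0] at h27
    refine hp (hx.dvd_of_dvd_mul hn ?_)
    rw [show p * x = 9 * k - q * y by linear_combination -hk]
    exact dvd_sub (h9.mul_right k) (hy.mul_left q)
  exact Nat.eq_27_of_dvd_27_of_not_dvd_9 (by exact_mod_cast h27) (by exact_mod_cast h9)

theorem stmt6_general (n : ℕ) (k l : ℤ)
    (hgcd : Int.gcd (n : ℤ) ((Int.gcd k l : ℤ)) = 1)
    (h : ∃ j : ZMod 3, (condE n k l j ∧ condF1 n k l (j + 2)) ∨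
        (condE n k l j ∧ condF2 n k l (2 - j))) :
    n = 27 := by
  obtain ⟨j, h⟩ := h
  fin_cases j <;> simp +decide only [condE, condF1, condF2, if_true, if_false] at h <;>
    obtain ⟨hE, hF⟩ | ⟨hE, hF⟩ := h
  · exact eq_27_of_pmMod_of_dvd hgcd hE hF 4 1 (-1) 2 (by ring) (by ring) (by decide)
  · exact eq_27_of_pmMod_of_dvd hgcd hE hF 5 1 1 2 (by ring) (by ring) (by decide)
  · exact eq_27_of_pmMod_of_dvd hgcd hE hF 1 2 5 1 (by ring) (by ring) (by decide)
  · exact eq_27_of_pmMod_of_dvd hgcd hE hF (-1) 2 4 1 (by ring) (by ring) (by decide)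
  · exact eq_27_of_pmMod_of_dvd hgcd hE hF 5 (-1) 4 1 (by ring) (by ring) (by decide)
  · exact eq_27_of_pmMod_of_dvd hgcd hE hF 4 (-1) 5 1 (by ring) (by ring) (by decide)

theorem stmt6 (n : ℕ) (hn : 2 ≤ n) (k l : ℤ)
    (hgcd : Int.gcd (n : ℤ) ((Int.gcd k l : ℤ)) = 1)
    (hB : ∀ j : ZMod 3, ¬ condB n k l j)
    (h : ∃ j : ZMod 3, (condE n k l j ∧ condF1 n k l (j + 2)) ∨
        (condE n k l j ∧ condF2 n k l (2 - j))) :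
    n = 27 :=
  stmt6_general n k l hgcd h
end

section
/- For every integer n ≥ 1 and all integers k, l, the cyclically presented group G_n(x_0 x_k x_l) is isomorphic (as a group) to the cyclically presented group G_n(x_0 x_{l−k} x_l). -/
set_option synthInstance.maxHeartbeats 1000000


/-- Relators `x_i x_{i+a} x_{i+b}` of the cyclic presentation `P_n(x_0 x_a x_b)`. -/
def posRels (n : ℕ) (a b : ZMod n) : Set (FreeGroup (ZMod n)) :=
  Set.range fun i : ZMod n => FreeGroup.of i * FreeGroup.of (i + a) * FreeGroup.of (i + b)

/-- The cyclically presented group `G_n(x_0 x_a x_b)`. -/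
abbrev Gpos (n : ℕ) (a b : ZMod n) : Type := PresentedGroup (posRels n a b)

/-- Relators `x_i x_{i+a} x_{i+b}⁻¹` of the cyclic presentation `P_n(x_0 x_a x_b⁻¹)`. -/
def negRels (n : ℕ) (a b : ZMod n) : Set (FreeGroup (ZMod n)) :=
  Set.range fun i : ZMod n => FreeGroup.of i * FreeGroup.of (i + a) * (FreeGroup.of (i + b))⁻¹

/-- The cyclically presented group `G_n(x_0 x_a x_b⁻¹)`. -/
abbrev Gneg (n : ℕ) (a b : ZMod n) : Type := PresentedGroup (negRels n a b)

lemma posRel_one (n : ℕ) (a b i : ZMod n) :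
    (PresentedGroup.of i : Gpos n a b) * PresentedGroup.of (i + a) *
      PresentedGroup.of (i + b) = 1 := by
  have hmem : FreeGroup.of i * FreeGroup.of (i + a) * FreeGroup.of (i + b) ∈ posRels n a b :=
    ⟨i, rfl⟩
  have : PresentedGroup.mk (posRels n a b)
      (FreeGroup.of i * FreeGroup.of (i + a) * FreeGroup.of (i + b)) = 1 :=
    (QuotientGroup.eq_one_iff _).mpr (Subgroup.subset_normalClosure hmem)
  simpa [map_mul, PresentedGroup.of] using this

noncomputable def shiftEquiv (n : ℕ) (a b : ZMod n) : Gpos n a b ≃* Gpos n (b - a) b := by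
  have hφ : ∀ r ∈ posRels n a b,
      FreeGroup.lift (fun i : ZMod n => (PresentedGroup.of (-i) : Gpos n (b - a) b)⁻¹) r = 1 := by
    rintro r ⟨i, rfl⟩
    have h := posRel_one n (b - a) b (-(i + b))
    have e1 : -(i + b) + (b - a) = -(i + a) := by ring
    have e2 : -(i + b) + b = -i := by ring
    rw [e1, e2] at h
    simp only [map_mul, FreeGroup.lift_apply_of, ← mul_inv_rev, inv_eq_one, ← mul_assoc]
    exact h
  have hψ : ∀ r ∈ posRels n (b - a) b,
      FreeGroup.lift (fun j : ZMod n => (PresentedGroup.of (-j) : Gpos n a b)⁻¹) r = 1 := by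
    rintro r ⟨j, rfl⟩
    have h := posRel_one n a b (-(j + b))
    have e1 : -(j + b) + a = -(j + (b - a)) := by ring
    have e2 : -(j + b) + b = -j := by ring
    rw [e1, e2] at h
    simp only [map_mul, FreeGroup.lift_apply_of, ← mul_inv_rev, inv_eq_one, ← mul_assoc]
    exact h
  have h1 : (PresentedGroup.toGroup hψ).comp (PresentedGroup.toGroup hφ) =
      MonoidHom.id (Gpos n a b) := by
    refine PresentedGroup.ext fun x => ?_
    simp [PresentedGroup.toGroup.of]
  have h2 : (PresentedGroup.toGroup hφ).comp (PresentedGroup.toGroup hψ) =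
      MonoidHom.id (Gpos n (b - a) b) := by
    refine PresentedGroup.ext fun x => ?_
    simp [PresentedGroup.toGroup.of]
  exact MonoidHom.toMulEquiv _ _ h1 h2

theorem stmt8 (n : ℕ) (hn : 1 ≤ n) (k l : ℤ) :
    Nonempty (Gpos n (k : ZMod n) (l : ZMod n) ≃*
      Gpos n ((l - k : ℤ) : ZMod n) (l : ZMod n)) := by
  have hc : ((l - k : ℤ) : ZMod n) = (l : ZMod n) - (k : ZMod n) := by push_cast; ring
  rw [hc]
  exact ⟨shiftEquiv n (k : ZMod n) (l : ZMod n)⟩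
end

section
/- For every integer n ≥ 1 and all integers m, k, the cyclically presented group G_n(x_0 x_m x_k^{-1}) is isomorphic (as a group) to the cyclically presented group G_n(x_0 x_m x_{m−k}^{-1}). -/
/-!
The substitution `x_i ↦ x_{-i}⁻¹` turns the relator `x_i x_{i+a} x_{i+b}⁻¹` into
`x_{-i}⁻¹ x_{-i-a}⁻¹ x_{-i-b}`, a conjugate of the inverse of the relator `x_j x_{j+a} x_{j+c}⁻¹` at
`j = -i-a` as soon as `b + c = a`. The substitution is an involution, so it is an isomorphism
`G_n(x_0 x_a x_b⁻¹) ≃ G_n(x_0 x_a x_c⁻¹)`.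
-/

namespace Gneg

variable {n : ℕ} {a b c : ZMod n}

lemma of_mul_of_add (i : ZMod n) :
    (PresentedGroup.of i : Gneg n a b) * PresentedGroup.of (i + a) =
      PresentedGroup.of (i + b) :=
  mul_inv_eq_one.mp (PresentedGroup.one_of_mem ⟨i, rfl⟩)

lemma lift_of_neg_inv_eq_one (h : b + c = a) :
    ∀ r ∈ negRels n a b,
      FreeGroup.lift (fun i => (PresentedGroup.of (-i) : Gneg n a c)⁻¹) r = 1 := by
  rintro r ⟨i, rfl⟩
  have hrel := of_mul_of_add (a := a) (b := c) (-i - a)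
  rw [show -i - a + a = -i by ring, show -i - a + c = -(i + b) by rw [← h]; ring] at hrel
  simp only [map_mul, map_inv, FreeGroup.lift_apply_of, inv_inv, ← hrel,
    show -(i + a) = -i - a by ring]
  group

def negInv (h : b + c = a) : Gneg n a b →* Gneg n a c :=
  PresentedGroup.toGroup (lift_of_neg_inv_eq_one h)

lemma negInv_of (h : b + c = a) (i : ZMod n) :
    negInv h (PresentedGroup.of i) = (PresentedGroup.of (-i))⁻¹ :=
  PresentedGroup.toGroup.of _

lemma negInv_comp_negInv (h : b + c = a) (h' : c + b = a) :
    (negInv h').comp (negInv h) = MonoidHom.id (Gneg n a b) :=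
  PresentedGroup.ext fun i => by simp [negInv_of]

def negInvEquiv (h : b + c = a) : Gneg n a b ≃* Gneg n a c :=
  (negInv h).toMulEquiv (negInv ((add_comm c b).trans h))
    (negInv_comp_negInv _ _) (negInv_comp_negInv _ _)

end Gneg

theorem stmt9_general (n : ℕ) (m k : ℤ) :
    Nonempty (Gneg n (m : ZMod n) (k : ZMod n) ≃*
      Gneg n (m : ZMod n) ((m - k : ℤ) : ZMod n)) :=
  ⟨Gneg.negInvEquiv (by push_cast; ring)⟩

theorem stmt9 (n : ℕ) (hn : 1 ≤ n) (m k : ℤ) :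
    Nonempty (Gneg n (m : ZMod n) (k : ZMod n) ≃*
      Gneg n (m : ZMod n) ((m - k : ℤ) : ZMod n)) :=
  stmt9_general n m k
end

section
/- The cyclically presented group G_8(x_0 x_1 x_5) is isomorphic (as a group) to the cyclically presented group G_8(x_0 x_4 x_1^{-1}); an isomorphism is induced by the relabelling of generators y_0 = x_0, y_1 = x_7^{-1}, y_2 = x_2, y_3 = x_1^{-1}, y_4 = x_4, y_5 = x_3^{-1}, y_6 = x_6, y_7 = x_5^{-1}. -/
lemma cyc {G : Type*} [Group G] {a b c : G} (h : a * (b * c) = 1) : b * c * a = 1 := by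
  rw [eq_inv_of_mul_eq_one_right h, inv_mul_cancel]

lemma oddF {G : Type*} [Group G] {a b c : G} (h : c * b * a = 1) : a⁻¹ * b⁻¹ * c⁻¹ = 1 := by
  rw [← mul_inv_rev, ← mul_inv_rev, inv_eq_one]
  simpa [mul_assoc] using h

lemma evenG {G : Type*} [Group G] {a b c : G} (h : c * b * a⁻¹ = 1) : a * b⁻¹ * c⁻¹ = 1 := by
  have h2 : c * b = a := mul_inv_eq_one.mp h
  rw [mul_assoc, ← mul_inv_rev, ← h2, mul_inv_cancel]

lemma oddG {G : Type*} [Group G] {a b c : G} (h : b * c * a⁻¹ = 1) : a⁻¹ * b * c = 1 := by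
  rw [mul_assoc, mul_inv_eq_one.mp h, inv_mul_cancel]

lemma posRel' (i j k : ZMod 8) (h1 : j = i + 1) (h2 : k = i + 5) :
    (PresentedGroup.of i * PresentedGroup.of j * PresentedGroup.of k : Gpos 8 1 5) = 1 := by
  subst h1 h2
  have h : FreeGroup.of i * FreeGroup.of (i + 1) * FreeGroup.of (i + 5) ∈ posRels 8 1 5 := ⟨i, rfl⟩
  exact (QuotientGroup.eq_one_iff _).mpr (Subgroup.subset_normalClosure h)

lemma negRel' (i j k : ZMod 8) (h1 : j = i + 4) (h2 : k = i + 1) :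
    (PresentedGroup.of i * PresentedGroup.of j * (PresentedGroup.of k)⁻¹ : Gneg 8 4 1) = 1 := by
  subst h1 h2
  have h : FreeGroup.of i * FreeGroup.of (i + 4) * (FreeGroup.of (i + 1))⁻¹ ∈ negRels 8 4 1 :=
    ⟨i, rfl⟩
  exact (QuotientGroup.eq_one_iff _).mpr (Subgroup.subset_normalClosure h)

/-- Forward map on generators. -/
def Fmap : ZMod 8 → Gpos 8 1 5 := fun i =>
  if i.val % 2 = 0 then PresentedGroup.of i else (PresentedGroup.of (i + 6))⁻¹

/-- Backward map on generators. -/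
def Gmap : ZMod 8 → Gneg 8 4 1 := fun i =>
  if i.val % 2 = 0 then PresentedGroup.of i else (PresentedGroup.of (i + 2))⁻¹

lemma Fmap0 : Fmap 0 = PresentedGroup.of 0 := if_pos (by decide)
lemma Fmap1 : Fmap 1 = (PresentedGroup.of 7)⁻¹ := by
  unfold Fmap; rw [if_neg (by decide)]; exact congrArg Inv.inv (congrArg _ (by decide))
lemma Fmap2 : Fmap 2 = PresentedGroup.of 2 := if_pos (by decide)
lemma Fmap3 : Fmap 3 = (PresentedGroup.of 1)⁻¹ := by
  unfold Fmap; rw [if_neg (by decide)]; exact congrArg Inv.inv (congrArg _ (by decide))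
lemma Fmap4 : Fmap 4 = PresentedGroup.of 4 := if_pos (by decide)
lemma Fmap5 : Fmap 5 = (PresentedGroup.of 3)⁻¹ := by
  unfold Fmap; rw [if_neg (by decide)]; exact congrArg Inv.inv (congrArg _ (by decide))
lemma Fmap6 : Fmap 6 = PresentedGroup.of 6 := if_pos (by decide)
lemma Fmap7 : Fmap 7 = (PresentedGroup.of 5)⁻¹ := by
  unfold Fmap; rw [if_neg (by decide)]; exact congrArg Inv.inv (congrArg _ (by decide))

lemma Gmap0 : Gmap 0 = PresentedGroup.of 0 := if_pos (by decide)
lemma Gmap1 : Gmap 1 = (PresentedGroup.of 3)⁻¹ := by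
  unfold Gmap; rw [if_neg (by decide)]; exact congrArg Inv.inv (congrArg _ (by decide))
lemma Gmap2 : Gmap 2 = PresentedGroup.of 2 := if_pos (by decide)
lemma Gmap3 : Gmap 3 = (PresentedGroup.of 5)⁻¹ := by
  unfold Gmap; rw [if_neg (by decide)]; exact congrArg Inv.inv (congrArg _ (by decide))
lemma Gmap4 : Gmap 4 = PresentedGroup.of 4 := if_pos (by decide)
lemma Gmap5 : Gmap 5 = (PresentedGroup.of 7)⁻¹ := by
  unfold Gmap; rw [if_neg (by decide)]; exact congrArg Inv.inv (congrArg _ (by decide))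
lemma Gmap6 : Gmap 6 = PresentedGroup.of 6 := if_pos (by decide)
lemma Gmap7 : Gmap 7 = (PresentedGroup.of 1)⁻¹ := by
  unfold Gmap; rw [if_neg (by decide)]; exact congrArg Inv.inv (congrArg _ (by decide))

lemma hF : ∀ r ∈ negRels 8 4 1, FreeGroup.lift Fmap r = 1 := by
  rintro r ⟨i, rfl⟩
  simp only [map_mul, map_inv, FreeGroup.lift_apply_of]
  have h8 : i = 0 ∨ i = 1 ∨ i = 2 ∨ i = 3 ∨ i = 4 ∨ i = 5 ∨ i = 6 ∨ i = 7 := by revert i; decide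
  rcases h8 with rfl | rfl | rfl | rfl | rfl | rfl | rfl | rfl <;>
    simp only [show (0:ZMod 8)+4 = 4 from by decide, show (0:ZMod 8)+1 = 1 from by decide,
      show (1:ZMod 8)+4 = 5 from by decide, show (1:ZMod 8)+1 = 2 from by decide,
      show (2:ZMod 8)+4 = 6 from by decide, show (2:ZMod 8)+1 = 3 from by decide,
      show (3:ZMod 8)+4 = 7 from by decide, show (3:ZMod 8)+1 = 4 from by decide,
      show (4:ZMod 8)+4 = 0 from by decide, show (4:ZMod 8)+1 = 5 from by decide,
      show (5:ZMod 8)+4 = 1 from by decide, show (5:ZMod 8)+1 = 6 from by decide,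
      show (6:ZMod 8)+4 = 2 from by decide, show (6:ZMod 8)+1 = 7 from by decide,
      show (7:ZMod 8)+4 = 3 from by decide, show (7:ZMod 8)+1 = 0 from by decide,
      Fmap0, Fmap1, Fmap2, Fmap3, Fmap4, Fmap5, Fmap6, Fmap7, inv_inv]
  · exact cyc (posRel' 7 0 4 (by decide) (by decide))
  · exact oddF (posRel' 2 3 7 (by decide) (by decide))
  · exact cyc (posRel' 1 2 6 (by decide) (by decide))
  · exact oddF (posRel' 4 5 1 (by decide) (by decide))
  · exact cyc (posRel' 3 4 0 (by decide) (by decide))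
  · exact oddF (posRel' 6 7 3 (by decide) (by decide))
  · exact cyc (posRel' 5 6 2 (by decide) (by decide))
  · exact oddF (posRel' 0 1 5 (by decide) (by decide))

lemma hG : ∀ r ∈ posRels 8 1 5, FreeGroup.lift Gmap r = 1 := by
  rintro r ⟨i, rfl⟩
  simp only [map_mul, FreeGroup.lift_apply_of]
  have h8 : i = 0 ∨ i = 1 ∨ i = 2 ∨ i = 3 ∨ i = 4 ∨ i = 5 ∨ i = 6 ∨ i = 7 := by revert i; decide
  rcases h8 with rfl | rfl | rfl | rfl | rfl | rfl | rfl | rfl <;>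
    simp only [show (0:ZMod 8)+5 = 5 from by decide, show (0:ZMod 8)+1 = 1 from by decide,
      show (1:ZMod 8)+5 = 6 from by decide, show (1:ZMod 8)+1 = 2 from by decide,
      show (2:ZMod 8)+5 = 7 from by decide, show (2:ZMod 8)+1 = 3 from by decide,
      show (3:ZMod 8)+5 = 0 from by decide, show (3:ZMod 8)+1 = 4 from by decide,
      show (4:ZMod 8)+5 = 1 from by decide, show (4:ZMod 8)+1 = 5 from by decide,
      show (5:ZMod 8)+5 = 2 from by decide, show (5:ZMod 8)+1 = 6 from by decide,
      show (6:ZMod 8)+5 = 3 from by decide, show (6:ZMod 8)+1 = 7 from by decide,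
      show (7:ZMod 8)+5 = 4 from by decide, show (7:ZMod 8)+1 = 0 from by decide,
      Gmap0, Gmap1, Gmap2, Gmap3, Gmap4, Gmap5, Gmap6, Gmap7, inv_inv]
  · exact evenG (negRel' 7 3 0 (by decide) (by decide))
  · exact oddG (negRel' 2 6 3 (by decide) (by decide))
  · exact evenG (negRel' 1 5 2 (by decide) (by decide))
  · exact oddG (negRel' 4 0 5 (by decide) (by decide))
  · exact evenG (negRel' 3 7 4 (by decide) (by decide))
  · exact oddG (negRel' 6 2 7 (by decide) (by decide))
  · exact evenG (negRel' 5 1 6 (by decide) (by decide))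
  · exact oddG (negRel' 0 4 1 (by decide) (by decide))

theorem stmt10 :
    ∃ e : Gneg 8 4 1 ≃* Gpos 8 1 5,
      e (PresentedGroup.of 0) = PresentedGroup.of 0 ∧
      e (PresentedGroup.of 1) = (PresentedGroup.of 7)⁻¹ ∧
      e (PresentedGroup.of 2) = PresentedGroup.of 2 ∧
      e (PresentedGroup.of 3) = (PresentedGroup.of 1)⁻¹ ∧
      e (PresentedGroup.of 4) = PresentedGroup.of 4 ∧
      e (PresentedGroup.of 5) = (PresentedGroup.of 3)⁻¹ ∧
      e (PresentedGroup.of 6) = PresentedGroup.of 6 ∧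
      e (PresentedGroup.of 7) = (PresentedGroup.of 5)⁻¹ := by
  have hgf : MonoidHom.comp (PresentedGroup.toGroup hG) (PresentedGroup.toGroup hF) = MonoidHom.id _ := by
    apply PresentedGroup.ext
    intro x
    have h8 : x = 0 ∨ x = 1 ∨ x = 2 ∨ x = 3 ∨ x = 4 ∨ x = 5 ∨ x = 6 ∨ x = 7 := by
      revert x; decide
    rcases h8 with rfl | rfl | rfl | rfl | rfl | rfl | rfl | rfl <;>
      simp only [MonoidHom.comp_apply, MonoidHom.id_apply, PresentedGroup.toGroup.of,
        Fmap0, Fmap1, Fmap2, Fmap3, Fmap4, Fmap5, Fmap6, Fmap7,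
        Gmap0, Gmap1, Gmap2, Gmap3, Gmap4, Gmap5, Gmap6, Gmap7, map_inv, inv_inv]
  have hfg : MonoidHom.comp (PresentedGroup.toGroup hF) (PresentedGroup.toGroup hG) = MonoidHom.id _ := by
    apply PresentedGroup.ext
    intro x
    have h8 : x = 0 ∨ x = 1 ∨ x = 2 ∨ x = 3 ∨ x = 4 ∨ x = 5 ∨ x = 6 ∨ x = 7 := by
      revert x; decide
    rcases h8 with rfl | rfl | rfl | rfl | rfl | rfl | rfl | rfl <;>
      simp only [MonoidHom.comp_apply, MonoidHom.id_apply, PresentedGroup.toGroup.of,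
        Fmap0, Fmap1, Fmap2, Fmap3, Fmap4, Fmap5, Fmap6, Fmap7,
        Gmap0, Gmap1, Gmap2, Gmap3, Gmap4, Gmap5, Gmap6, Gmap7, map_inv, inv_inv]
  refine ⟨MonoidHom.toMulEquiv _ _ hgf hfg, ?_, ?_, ?_, ?_, ?_, ?_, ?_, ?_⟩ <;>
    simp only [MonoidHom.toMulEquiv, MulEquiv.coe_mk, Equiv.coe_fn_mk,
      PresentedGroup.toGroup.of, Fmap0, Fmap1, Fmap2, Fmap3, Fmap4, Fmap5, Fmap6, Fmap7]
end

section
/- In the cyclically presented group G_8(x_0 x_1 x_5), writing x_i for the image of the generator indexed by i ∈ ZMod 8, the identity (x_2 x_0)(x_3 x_5 x_7 x_1)(x_2 x_0)^{-1} = x_1 x_3 x_5 x_7 holds. -/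
theorem stmt11 :
    let x : ZMod 8 → Gpos 8 1 5 := PresentedGroup.of
    (x 2 * x 0) * (x 3 * x 5 * x 7 * x 1) * (x 2 * x 0)⁻¹ = x 1 * x 3 * x 5 * x 7 := by
  intro x
  have rel : ∀ i j k : ZMod 8, i + 1 = j → i + 5 = k → x i * x j * x k = 1 := by
    intro i j k hj hk
    subst hj; subst hk
    show PresentedGroup.mk _ (FreeGroup.of i) * PresentedGroup.mk _ (FreeGroup.of (i+1)) *
      PresentedGroup.mk _ (FreeGroup.of (i+5)) = 1
    rw [← map_mul, ← map_mul]
    exact (QuotientGroup.eq_one_iff _).mpr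
      (Subgroup.subset_normalClosure ⟨i, rfl⟩)
  have r1 : ∀ i j k : ZMod 8, i + 1 = j → i + 5 = k → x i * x j = (x k)⁻¹ :=
    fun i j k hj hk => eq_inv_of_mul_eq_one_left (rel i j k hj hk)
  have r2 : ∀ i j k : ZMod 8, i + 1 = j → i + 5 = k → x j * x k = (x i)⁻¹ := by
    intro i j k hj hk
    exact eq_inv_of_mul_eq_one_right (by rw [← mul_assoc]; exact rel i j k hj hk)
  have r3 : ∀ i j k : ZMod 8, i + 1 = j → i + 5 = k → x k * x i = (x j)⁻¹ := by
    intro i j k hj hk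
    have h : x j = (x i)⁻¹ * (x k)⁻¹ := by rw [← r1 i j k hj hk]; group
    rw [h]; group
  have r5 : ∀ i j k : ZMod 8, i + 1 = j → i + 5 = k → (x k)⁻¹ * (x j)⁻¹ = x i := by
    intro i j k hj hk
    rw [← mul_inv_rev, r2 i j k hj hk, inv_inv]
  rw [mul_inv_eq_iff_eq_mul]
  calc x 2 * x 0 * (x 3 * x 5 * x 7 * x 1)
    _ = x 2 * x 0 * x 3 * x 5 * x 7 * x 1 := by group
    _ = x 2 * x 0 * x 3 * x 5 * ((x 4)⁻¹ * (x 0)⁻¹) * x 1 := by rw [(r5 7 0 4 (by decide) (by decide)).symm]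
    _ = x 2 * x 0 * x 3 * x 5 * (x 4)⁻¹ * (x 0)⁻¹ * x 1 := by group
    _ = x 2 * x 0 * x 3 * x 5 * (x 4)⁻¹ * (x 1 * x 5) * x 1 := by rw [(r2 0 1 5 (by decide) (by decide)).symm]
    _ = x 2 * x 0 * x 3 * x 5 * (x 4)⁻¹ * x 1 * (x 5 * x 1) := by group
    _ = x 2 * x 0 * x 3 * x 5 * (x 4)⁻¹ * ((x 6)⁻¹ * (x 2)⁻¹) * (x 5 * x 1) := by rw [(r5 1 2 6 (by decide) (by decide)).symm]
    _ = x 2 * x 0 * x 3 * x 5 * (x 4)⁻¹ * (x 6)⁻¹ * (x 2)⁻¹ * (x 5 * x 1) := by group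
    _ = x 2 * x 0 * x 3 * x 5 * (x 4)⁻¹ * (x 6)⁻¹ * (x 5 * x 6) * (x 5 * x 1) := by rw [(r1 5 6 2 (by decide) (by decide)).symm]
    _ = x 2 * x 0 * x 3 * x 5 * (x 4)⁻¹ * (x 6)⁻¹ * x 5 * x 6 * (x 5 * x 1) := by group
    _ = x 2 * x 0 * x 3 * x 5 * (x 4)⁻¹ * (x 6)⁻¹ * x 5 * x 6 * (x 4)⁻¹ := by rw [r2 4 5 1 (by decide) (by decide)]
    _ = x 2 * x 0 * x 3 * x 5 * (x 4)⁻¹ * (x 6)⁻¹ * x 5 * ((x 3)⁻¹ * (x 7)⁻¹) * (x 4)⁻¹ := by rw [(r5 6 7 3 (by decide) (by decide)).symm]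
    _ = x 2 * x 0 * x 3 * x 5 * (x 4)⁻¹ * (x 6)⁻¹ * x 5 * (x 3)⁻¹ * (x 7)⁻¹ * (x 4)⁻¹ := by group
    _ = x 2 * x 0 * x 3 * x 5 * (x 4)⁻¹ * (x 6)⁻¹ * x 5 * (x 3)⁻¹ * (x 0 * x 4) * (x 4)⁻¹ := by rw [(r2 7 0 4 (by decide) (by decide)).symm]
    _ = x 2 * x 0 * x 3 * x 5 * (x 4)⁻¹ * ((x 6)⁻¹ * x 5 * (x 3)⁻¹ * x 0) := by group
    _ = x 2 * x 0 * x 3 * x 5 * (x 0 * x 3) * ((x 6)⁻¹ * x 5 * (x 3)⁻¹ * x 0) := by rw [(r3 3 4 0 (by decide) (by decide)).symm]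
    _ = x 2 * x 0 * x 3 * (x 5 * x 0) * (x 3 * (x 6)⁻¹ * x 5 * (x 3)⁻¹ * x 0) := by group
    _ = x 2 * x 0 * x 3 * (x 1)⁻¹ * (x 3 * (x 6)⁻¹ * x 5 * (x 3)⁻¹ * x 0) := by rw [r3 0 1 5 (by decide) (by decide)]
    _ = x 2 * x 0 * x 3 * (x 1)⁻¹ * x 3 * (x 6)⁻¹ * (x 5 * (x 3)⁻¹ * x 0) := by group
    _ = x 2 * x 0 * x 3 * (x 1)⁻¹ * x 3 * (x 7 * x 3) * (x 5 * (x 3)⁻¹ * x 0) := by rw [(r2 6 7 3 (by decide) (by decide)).symm]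
    _ = x 2 * x 0 * x 3 * (x 1)⁻¹ * (x 3 * x 7) * (x 3 * x 5 * (x 3)⁻¹ * x 0) := by group
    _ = x 2 * x 0 * x 3 * (x 1)⁻¹ * (x 2)⁻¹ * (x 3 * x 5 * (x 3)⁻¹ * x 0) := by rw [r2 2 3 7 (by decide) (by decide)]
    _ = x 2 * x 0 * x 3 * (x 1)⁻¹ * (x 2)⁻¹ * x 3 * x 5 * (x 3)⁻¹ * x 0 := by group
    _ = x 2 * x 0 * x 3 * (x 1)⁻¹ * (x 2)⁻¹ * x 3 * x 5 * (x 7 * x 2) * x 0 := by rw [(r3 2 3 7 (by decide) (by decide)).symm]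
    _ = x 2 * (x 0 * x 3) * ((x 1)⁻¹ * (x 2)⁻¹ * x 3 * x 5 * x 7 * x 2 * x 0) := by group
    _ = x 2 * (x 4)⁻¹ * ((x 1)⁻¹ * (x 2)⁻¹ * x 3 * x 5 * x 7 * x 2 * x 0) := by rw [r3 3 4 0 (by decide) (by decide)]
    _ = x 2 * (x 5 * x 1) * ((x 1)⁻¹ * (x 2)⁻¹ * x 3 * x 5 * x 7 * x 2 * x 0) := by rw [(r2 4 5 1 (by decide) (by decide)).symm]
    _ = (x 2 * x 5) * ((x 2)⁻¹ * x 3 * x 5 * x 7 * x 2 * x 0) := by group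
    _ = (x 6)⁻¹ * ((x 2)⁻¹ * x 3 * x 5 * x 7 * x 2 * x 0) := by rw [r3 5 6 2 (by decide) (by decide)]
    _ = (x 1 * x 2) * ((x 2)⁻¹ * x 3 * x 5 * x 7 * x 2 * x 0) := by rw [(r1 1 2 6 (by decide) (by decide)).symm]
    _ = x 1 * x 3 * x 5 * x 7 * (x 2 * x 0) := by group
end

section
/- Let n ≥ 2 be an even integer and let m, k be integers with 2k − m ≡ n/2 (mod n) and gcd(n, m, k) = 1. Then the cyclically presented group G_n(x_0 x_m x_k^{-1}) is isomorphic (as a group) to G_n(x_0 x_{n/2+2} x_1^{-1}). -/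
/-!
Two moves change the parameters of `G_n(x_0 x_a x_b⁻¹)` without changing the group: multiplying all
indices by a unit `u` of `ℤ/n` gives `(u a, u b)`, and inverting every generator gives
`(-a, b - a)`. The second move preserves `2b - a`, and since `gcd(n, m, k) = 1` one of `k`, `k - m`
is odd, so we may assume `k` odd. Then a common divisor of `k` and `n` is odd, so it divides `n/2`
and, by the congruence `2k - m ≡ n/2`, also `m`; hence `k` is a unit mod `n`. Its inverse `q` is
odd, so `q · n/2 ≡ n/2` and `q m ≡ 2 - n/2 ≡ n/2 + 2`.
-/

theorem Int.isCoprime_of_odd_of_dvd_two_mul_sub {h m k : ℤ} (hk : Odd k)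
    (hcong : 2 * h ∣ 2 * k - m - h) (hgcd : Int.gcd (2 * h) (Int.gcd m k) = 1) :
    IsCoprime k (2 * h) := by
  obtain ⟨w, hw⟩ := hk
  have hk2 : IsCoprime k 2 := ⟨1, -w, by rw [hw]; ring⟩
  set d : ℕ := Int.gcd k (2 * h)
  have hdk : (d : ℤ) ∣ k := Int.gcd_dvd_left _ _
  have hdn : (d : ℤ) ∣ 2 * h := Int.gcd_dvd_right _ _
  have hdh : (d : ℤ) ∣ h := (hk2.of_isCoprime_of_dvd_left hdk).dvd_of_dvd_mul_left hdn
  have hdm : (d : ℤ) ∣ m := by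
    have := ((hdk.mul_left 2).sub hdh).sub (hdn.trans hcong)
    rwa [sub_sub_sub_cancel_right, sub_sub_cancel] at this
  rw [Int.isCoprime_iff_gcd_eq_one, ← Nat.dvd_one, ← hgcd]
  exact Int.dvd_gcd hdn (Int.dvd_coe_gcd hdm hdk)

theorem ZMod.exists_unit_mul_eq_add_two {n h : ℕ} (hn : n = 2 * h) {m k : ℤ} (hk : Odd k)
    (hcong : (n : ℤ) ∣ 2 * k - m - h) (hgcd : Int.gcd n (Int.gcd m k) = 1) :
    ∃ u : (ZMod n)ˣ, u * (m : ZMod n) = h + 2 ∧ u * (k : ZMod n) = 1 := by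
  subst hn
  push_cast at hcong hgcd
  obtain ⟨q, v, hqv⟩ := Int.isCoprime_of_odd_of_dvd_two_mul_sub hk hcong hgcd
  have hqk_odd : Odd (q * k) := ⟨-(v * h), by linear_combination hqv⟩
  obtain ⟨w, hw⟩ := (Int.odd_mul.mp hqk_odd).1
  have h2 : (2 * h : ZMod (2 * h)) = 0 := by exact_mod_cast ZMod.natCast_self (2 * h)
  have hqv' : (q * k + v * (2 * h) : ZMod (2 * h)) = 1 := by
    simpa using congrArg (Int.cast : ℤ → ZMod (2 * h)) hqv
  have hw' : (q : ZMod (2 * h)) = 2 * w + 1 := by exact_mod_cast congrArg Int.cast hw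
  have hqk : (q * k : ZMod (2 * h)) = 1 := by linear_combination hqv' - v * h2
  have hm : (2 * k - m - h : ZMod (2 * h)) = 0 := by
    exact_mod_cast (ZMod.intCast_zmod_eq_zero_iff_dvd _ _).mpr (by exact_mod_cast hcong)
  refine ⟨Units.mkOfMulEqOne _ _ hqk, ?_, hqk⟩
  rw [Units.val_mkOfMulEqOne]
  linear_combination (-q) * hm + 2 * hqk - (w + 1) * h2 - h * hw'

namespace Gneg

variable {n : ℕ} {a b a' b' : ZMod n}

theorem of_mul_of (i : ZMod n) :
    (PresentedGroup.of i * PresentedGroup.of (i + a) : Gneg n a b) = PresentedGroup.of (i + b) :=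
  eq_of_mul_inv_eq_one (PresentedGroup.one_of_mem ⟨i, rfl⟩)

def reindexMul (c : ZMod n) (ha : a' = c * a) (hb : b' = c * b) : Gneg n a b →* Gneg n a' b' :=
  PresentedGroup.toGroup (f := fun i => PresentedGroup.of (c * i)) <| by
    rintro _ ⟨i, rfl⟩
    simp only [map_mul, map_inv, FreeGroup.lift_apply_of, mul_add, ← ha, ← hb, of_mul_of,
      mul_inv_cancel]

theorem reindexMul_of (c : ZMod n) (ha : a' = c * a) (hb : b' = c * b) (i : ZMod n) :
    reindexMul c ha hb (PresentedGroup.of i) = PresentedGroup.of (c * i) :=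
  PresentedGroup.toGroup.of _

def invGens (ha : a' = -a) (hb : b' = b - a) : Gneg n a b →* Gneg n a' b' :=
  PresentedGroup.toGroup (f := fun i => (PresentedGroup.of i)⁻¹) <| by
    subst ha hb
    rintro _ ⟨i, rfl⟩
    -- the image `x_i⁻¹ x_{i+a}⁻¹ x_{i+b}` of a relator is a conjugate of the inverse of the
    -- target relator at index `i + a`
    have h := of_mul_of (a := -a) (b := b - a) (i + a)
    rw [add_neg_cancel_right, add_add_sub_cancel] at h
    simp only [map_mul, map_inv, FreeGroup.lift_apply_of, inv_inv, ← mul_inv_rev, h,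
      inv_mul_cancel]

theorem invGens_of (ha : a' = -a) (hb : b' = b - a) (i : ZMod n) :
    invGens ha hb (PresentedGroup.of i) = (PresentedGroup.of i)⁻¹ :=
  PresentedGroup.toGroup.of _

def reindexMulEquiv (u : (ZMod n)ˣ) : Gneg n a b ≃* Gneg n (u * a) (u * b) :=
  MonoidHom.toMulEquiv (reindexMul u rfl rfl) (reindexMul ↑u⁻¹ (by simp) (by simp))
    (PresentedGroup.ext fun i => by simp [reindexMul_of])
    (PresentedGroup.ext fun i => by simp [reindexMul_of])

def invGensEquiv : Gneg n a b ≃* Gneg n (-a) (b - a) :=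
  MonoidHom.toMulEquiv (invGens rfl rfl) (invGens (neg_neg a).symm (by ring))
    (PresentedGroup.ext fun i => by simp [invGens_of])
    (PresentedGroup.ext fun i => by simp [invGens_of])

theorem nonempty_mulEquiv_of_odd {h : ℕ} (hn : n = 2 * h) {m k : ℤ} (hk : Odd k)
    (hcong : (n : ℤ) ∣ 2 * k - m - h) (hgcd : Int.gcd n (Int.gcd m k) = 1) :
    Nonempty (Gneg n m k ≃* Gneg n (h + 2) 1) := by
  obtain ⟨u, hum, huk⟩ := ZMod.exists_unit_mul_eq_add_two hn hk hcong hgcd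
  exact ⟨hum ▸ huk ▸ reindexMulEquiv u⟩

end Gneg

theorem stmt13_general (n : ℕ) (heven : 2 ∣ n) (m k : ℤ)
    (hcong : (n : ℤ) ∣ (2 * k - m - ((n / 2 : ℕ) : ℤ)))
    (hgcd : Int.gcd (n : ℤ) ((Int.gcd m k : ℤ)) = 1) :
    Nonempty (Gneg n (m : ZMod n) (k : ZMod n) ≃*
      Gneg n ((n / 2 + 2 : ℕ) : ZMod n) 1) := by
  have hn : n = 2 * (n / 2) := (Nat.mul_div_cancel' heven).symm
  rw [Nat.cast_add, Nat.cast_ofNat]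
  rcases Int.even_or_odd k with hk | hk
  · have hm : Odd m := by
      by_contra hm
      have h2 : (2 : ℕ) ∣ Int.gcd n (Int.gcd m k) :=
        Int.dvd_gcd (by exact_mod_cast heven)
          (Int.dvd_coe_gcd (Int.not_odd_iff_even.mp hm).two_dvd hk.two_dvd)
      rw [hgcd] at h2
      exact absurd h2 (by norm_num)
    obtain ⟨e⟩ := Gneg.nonempty_mulEquiv_of_odd hn (m := -m) (k := k - m) (hk.sub_odd hm)
      (by convert hcong using 1; ring) (by simpa using hgcd)
    rw [Int.cast_neg, Int.cast_sub] at e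
    exact ⟨Gneg.invGensEquiv.trans e⟩
  · exact Gneg.nonempty_mulEquiv_of_odd hn hk hcong hgcd

theorem stmt13 (n : ℕ) (hn : 2 ≤ n) (heven : 2 ∣ n) (m k : ℤ)
    (hcong : (n : ℤ) ∣ (2 * k - m - ((n / 2 : ℕ) : ℤ)))
    (hgcd : Int.gcd (n : ℤ) ((Int.gcd m k : ℤ)) = 1) :
    Nonempty (Gneg n (m : ZMod n) (k : ZMod n) ≃*
      Gneg n ((n / 2 + 2 : ℕ) : ZMod n) 1) :=
  stmt13_general n heven m k hcong hgcd
end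

section
/- Let n ≥ 2 and m, k be integers, set A = k and B = k − m, and assume A ≢ 0 and B ≢ 0 (mod n). Then: (i) if (α.0) and (α.1) both hold then (σ+) or (σ−) holds; (ii) if (α.0) and (γ−) both hold then A ≡ ±n/3 (mod n), so (ρ.1) holds, and if (α.1) and (γ−) both hold then B ≡ ±n/3 (mod n), so (ρ.0) holds; (iii) if (α.0) holds together with (β+.0) or (β−.0), then A ≡ n/2 (mod n), so (ρ.1) holds; (iv) if (α.1) holds together with (β+.1) or (β−.1), then B ≡ n/2 (mod n), so (ρ.0) holds; (v) if (β+.0) and (β−.0) both hold then A ≡ n/2 (mod n), so (ρ.1) holds; (vi) if (β+.1) and (β−.1) both hold then B ≡ n/2 (mod n), so (ρ.0) holds; (vii) if (β−.0) and (γ−) both hold then B ≡ ±n/4 (mod n), so (ρ.0) holds; (viii) if (β−.1) and (γ−) both hold then A ≡ ±n/4 (mod n), so (ρ.1) holds. -/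
/-- `c ≡ n/2 (mod n)`: `2` divides `n` and `c ≡ n/2 (mod n)`. -/
def halfMod (n c : ℤ) : Prop := 2 ∣ n ∧ n ∣ (c - n / 2)

/-- `c ≡ ±2n/5 (mod n)`: `5` divides `n`, and `c ≡ 2n/5` or `c ≡ -2n/5 (mod n)`. -/
def pm2n5Mod (n c : ℤ) : Prop := 5 ∣ n ∧ (n ∣ (c - 2 * (n / 5)) ∨ n ∣ (c + 2 * (n / 5)))

/-- Condition (ρ) for a parameter `c` (i.e. (ρ.0) when `c = B`, (ρ.1) when `c = A`):
`c ≡ n/2` or `c ≡ ±n/3` or `c ≡ ±n/4` or `c ≡ ±n/5` or `c ≡ ±2n/5 (mod n)`. -/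
def condRho (n c : ℤ) : Prop :=
  halfMod n c ∨ pmMod n 3 c ∨ pmMod n 4 c ∨ pmMod n 5 c ∨ pm2n5Mod n c

lemma halfAux (n c : ℤ) (h : n ∣ 2 * c) (hc : ¬ n ∣ c) : halfMod n c := by
  obtain ⟨s, hs⟩ := h
  rcases Int.even_or_odd s with ⟨d, hd⟩ | ⟨d, hd⟩
  · subst hd
    exact absurd ⟨d, mul_left_cancel₀ (two_ne_zero) (by linear_combination hs)⟩ hc
  · subst hd
    obtain ⟨q, h2, hdq⟩ : ∃ q, n = 2 * q ∧ n ∣ c - q :=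
      ⟨c - n * d, by linear_combination -hs, ⟨d, by ring⟩⟩
    have hh : n / 2 = q := by omega
    exact ⟨⟨q, h2⟩, by rw [hh]; exact hdq⟩

lemma quarterAux (n c : ℤ) (h2 : 2 ∣ n) (h : n ∣ (2 * c - n / 2)) : pmMod n 4 c := by
  obtain ⟨u, hu⟩ := h2
  have hu2 : n / 2 = u := by omega
  obtain ⟨s, hs⟩ := h
  rw [hu2, hu] at hs
  rcases Int.even_or_odd u with ⟨w, hw⟩ | ⟨w, hw⟩
  · subst hw
    have h4 : n = 4 * w := by omega
    have hn4 : n / 4 = w := by omega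
    refine ⟨⟨w, h4⟩, ?_⟩
    rw [hn4]
    rcases Int.even_or_odd s with ⟨t, ht⟩ | ⟨t, ht⟩
    · subst ht
      refine Or.inl ⟨t, ?_⟩
      rw [h4]
      have h2c : (2:ℤ) * (c - w) = 2 * (4 * w * t) := by linear_combination hs
      exact mul_left_cancel₀ (by norm_num : (2:ℤ) ≠ 0) h2c
    · subst ht
      refine Or.inr ⟨t + 1, ?_⟩
      rw [h4]
      have h2c : (2:ℤ) * (c + w) = 2 * (4 * w * (t + 1)) := by linear_combination hs
      exact mul_left_cancel₀ (by norm_num : (2:ℤ) ≠ 0) h2c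
  · exfalso
    obtain ⟨q, hq⟩ : ∃ q, 2 * c - (2 * w + 1) = 2 * q :=
      ⟨(2 * w + 1) * s, by linear_combination hs + (1 + 2 * s) * hw⟩
    omega

theorem stmt14 (n : ℕ) (hn : 2 ≤ n) (m k : ℤ)
    (hA : ¬ (n : ℤ) ∣ k) (hB : ¬ (n : ℤ) ∣ (k - m)) :
    -- (i): (α.0) and (α.1) imply (σ+) or (σ−)
    ((pmMod n 6 (k - m) ∧ pmMod n 6 k) →
      ((n : ℤ) ∣ (k + (k - m)) ∨ (n : ℤ) ∣ (k - (k - m)))) ∧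
    -- (ii): (α.0) and (γ−) imply A ≡ ±n/3, so (ρ.1)
    ((pmMod n 6 (k - m) ∧ halfMod n (k - (k - m))) →
      pmMod n 3 k ∧ condRho (n : ℤ) k) ∧
    -- (ii): (α.1) and (γ−) imply B ≡ ±n/3, so (ρ.0)
    ((pmMod n 6 k ∧ halfMod n (k - (k - m))) →
      pmMod n 3 (k - m) ∧ condRho (n : ℤ) (k - m)) ∧
    -- (iii): (α.0) and ((β+.0) or (β−.0)) imply A ≡ n/2, so (ρ.1)
    ((pmMod n 6 (k - m) ∧
        ((n : ℤ) ∣ (k + 3 * (k - m)) ∨ (n : ℤ) ∣ (k - 3 * (k - m)))) →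
      halfMod n k ∧ condRho (n : ℤ) k) ∧
    -- (iv): (α.1) and ((β+.1) or (β−.1)) imply B ≡ n/2, so (ρ.0)
    ((pmMod n 6 k ∧ ((n : ℤ) ∣ ((k - m) + 3 * k) ∨ (n : ℤ) ∣ ((k - m) - 3 * k))) →
      halfMod n (k - m) ∧ condRho (n : ℤ) (k - m)) ∧
    -- (v): (β+.0) and (β−.0) imply A ≡ n/2, so (ρ.1)
    (((n : ℤ) ∣ (k + 3 * (k - m)) ∧ (n : ℤ) ∣ (k - 3 * (k - m))) →
      halfMod n k ∧ condRho (n : ℤ) k) ∧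
    -- (vi): (β+.1) and (β−.1) imply B ≡ n/2, so (ρ.0)
    (((n : ℤ) ∣ ((k - m) + 3 * k) ∧ (n : ℤ) ∣ ((k - m) - 3 * k)) →
      halfMod n (k - m) ∧ condRho (n : ℤ) (k - m)) ∧
    -- (vii): (β−.0) and (γ−) imply B ≡ ±n/4, so (ρ.0)
    (((n : ℤ) ∣ (k - 3 * (k - m)) ∧ halfMod n (k - (k - m))) →
      pmMod n 4 (k - m) ∧ condRho (n : ℤ) (k - m)) ∧
    -- (viii): (β−.1) and (γ−) imply A ≡ ±n/4, so (ρ.1)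
    (((n : ℤ) ∣ ((k - m) - 3 * k) ∧ halfMod n (k - (k - m))) →
      pmMod n 4 k ∧ condRho (n : ℤ) k) := by
  refine ⟨?_, ?_, ?_, ?_, ?_, ?_, ?_, ?_, ?_⟩
  -- (i)
  · rintro ⟨⟨-, hB'⟩, ⟨-, hA'⟩⟩
    rcases hA' with hA1 | hA1 <;> rcases hB' with hB1 | hB1
    · refine Or.inr ?_
      have h := dvd_sub hA1 hB1
      rwa [show k - (n:ℤ)/6 - ((k - m) - (n:ℤ)/6) = k - (k - m) by ring] at h
    · refine Or.inl ?_
      have h := dvd_add hA1 hB1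
      rwa [show k - (n:ℤ)/6 + ((k - m) + (n:ℤ)/6) = k + (k - m) by ring] at h
    · refine Or.inl ?_
      have h := dvd_add hA1 hB1
      rwa [show k + (n:ℤ)/6 + ((k - m) - (n:ℤ)/6) = k + (k - m) by ring] at h
    · refine Or.inr ?_
      have h := dvd_sub hA1 hB1
      rwa [show k + (n:ℤ)/6 - ((k - m) + (n:ℤ)/6) = k - (k - m) by ring] at h
  -- (ii) a
  · rintro ⟨⟨h6, hB'⟩, ⟨-, hγ⟩⟩
    obtain ⟨u, hu⟩ := h6
    have h6v : (n:ℤ)/6 = u := by omega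
    have h2v : (n:ℤ)/2 = 3*u := by omega
    rw [h6v] at hB'
    rw [h2v] at hγ
    obtain ⟨s, hs⟩ := hγ
    rw [hu] at hs
    have h3 : pmMod (n:ℤ) 3 k := by
      refine ⟨⟨2*u, by omega⟩, ?_⟩
      have h3v : (n:ℤ)/3 = 2*u := by omega
      rw [h3v]
      rcases hB' with ⟨t, ht⟩ | ⟨t, ht⟩
      · exact Or.inr ⟨s + t + 1, by rw [hu] at ht ⊢; linear_combination hs + ht⟩
      · exact Or.inl ⟨s + t, by rw [hu] at ht ⊢; linear_combination hs + ht⟩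
    exact ⟨h3, Or.inr (Or.inl h3)⟩
  -- (ii) b
  · rintro ⟨⟨h6, hA'⟩, ⟨-, hγ⟩⟩
    obtain ⟨u, hu⟩ := h6
    have h6v : (n:ℤ)/6 = u := by omega
    have h2v : (n:ℤ)/2 = 3*u := by omega
    rw [h6v] at hA'
    rw [h2v] at hγ
    obtain ⟨s, hs⟩ := hγ
    rw [hu] at hs
    have h3 : pmMod (n:ℤ) 3 (k - m) := by
      refine ⟨⟨2*u, by omega⟩, ?_⟩
      have h3v : (n:ℤ)/3 = 2*u := by omega
      rw [h3v]
      rcases hA' with ⟨t, ht⟩ | ⟨t, ht⟩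
      · exact Or.inr ⟨t - s, by rw [hu] at ht ⊢; linear_combination ht - hs⟩
      · exact Or.inl ⟨t - s - 1, by rw [hu] at ht ⊢; linear_combination ht - hs⟩
    exact ⟨h3, Or.inr (Or.inl h3)⟩
  -- (iii)
  · rintro ⟨⟨h6, hB'⟩, hβ⟩
    obtain ⟨u, hu⟩ := h6
    have h6v : (n:ℤ)/6 = u := by omega
    have h2v : (n:ℤ)/2 = 3*u := by omega
    rw [h6v] at hB'
    have hh : halfMod (n:ℤ) k := by
      refine ⟨⟨3*u, by omega⟩, ?_⟩
      rw [h2v]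
      rcases hβ with ⟨s, hs⟩ | ⟨s, hs⟩ <;> rcases hB' with ⟨t, ht⟩ | ⟨t, ht⟩
      · exact ⟨s - 3*t - 1, by rw [hu] at hs ht ⊢; linear_combination hs - 3*ht⟩
      · exact ⟨s - 3*t, by rw [hu] at hs ht ⊢; linear_combination hs - 3*ht⟩
      · exact ⟨s + 3*t, by rw [hu] at hs ht ⊢; linear_combination hs + 3*ht⟩
      · exact ⟨s + 3*t - 1, by rw [hu] at hs ht ⊢; linear_combination hs + 3*ht⟩
    exact ⟨hh, Or.inl hh⟩
  -- (iv)
  · rintro ⟨⟨h6, hA'⟩, hβ⟩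
    obtain ⟨u, hu⟩ := h6
    have h6v : (n:ℤ)/6 = u := by omega
    have h2v : (n:ℤ)/2 = 3*u := by omega
    rw [h6v] at hA'
    have hh : halfMod (n:ℤ) (k - m) := by
      refine ⟨⟨3*u, by omega⟩, ?_⟩
      rw [h2v]
      rcases hβ with ⟨s, hs⟩ | ⟨s, hs⟩ <;> rcases hA' with ⟨t, ht⟩ | ⟨t, ht⟩
      · exact ⟨s - 3*t - 1, by rw [hu] at hs ht ⊢; linear_combination hs - 3*ht⟩
      · exact ⟨s - 3*t, by rw [hu] at hs ht ⊢; linear_combination hs - 3*ht⟩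
      · exact ⟨s + 3*t, by rw [hu] at hs ht ⊢; linear_combination hs + 3*ht⟩
      · exact ⟨s + 3*t - 1, by rw [hu] at hs ht ⊢; linear_combination hs + 3*ht⟩
    exact ⟨hh, Or.inl hh⟩
  -- (v)
  · rintro ⟨h1, h2⟩
    have h2A : (n:ℤ) ∣ 2*k := by
      have h := dvd_add h1 h2
      rwa [show k + 3*(k - m) + (k - 3*(k - m)) = 2*k by ring] at h
    have hh := halfAux (n:ℤ) k h2A hA
    exact ⟨hh, Or.inl hh⟩
  -- (vi)
  · rintro ⟨h1, h2⟩
    have h2B : (n:ℤ) ∣ 2*(k - m) := by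
      have h := dvd_add h1 h2
      rwa [show (k - m) + 3*k + ((k - m) - 3*k) = 2*(k - m) by ring] at h
    have hh := halfAux (n:ℤ) (k - m) h2B hB
    exact ⟨hh, Or.inl hh⟩
  -- (vii)
  · rintro ⟨hβ, h2, hγ⟩
    have key : (n:ℤ) ∣ (2*(k - m) - (n:ℤ)/2) := by
      have h := dvd_sub hγ hβ
      rwa [show k - (k - m) - (n:ℤ)/2 - (k - 3*(k - m)) = 2*(k - m) - (n:ℤ)/2 by ring] at h
    have h4 := quarterAux (n:ℤ) (k - m) h2 key
    exact ⟨h4, Or.inr (Or.inr (Or.inl h4))⟩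
  -- (viii)
  · rintro ⟨hβ, h2, hγ⟩
    obtain ⟨u, hu⟩ := h2
    have hv : (n:ℤ)/2 = u := by omega
    rw [hv] at hγ
    have key : (n:ℤ) ∣ (2*k - (n:ℤ)/2) := by
      rw [hv]
      obtain ⟨s, hs⟩ := hγ
      obtain ⟨t, ht⟩ := hβ
      exact ⟨-s - t - 1, by rw [hu] at hs ht ⊢; linear_combination -hs - ht⟩
    have h4 := quarterAux (n:ℤ) k ⟨u, hu⟩ key
    exact ⟨h4, Or.inr (Or.inr (Or.inl h4))⟩
end

section
/- Let n ≥ 2 and m, k be integers with gcd(n, m, k) = 1; set A = k and B = k − m. If (β+.0) and (β+.1) both hold, or (β+.0) and (γ−) both hold, or (β+.1) and (γ−) both hold, then n divides 8; if moreover neither (ρ.0) nor (ρ.1) holds, then n = 8. -/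
/-!
Each of the three pairs of conditions is a pair of linear congruences in `A` and `B` whose
integer combinations produce `8A ≡ 0` and `8B ≡ 0` (for `(γ−)` one uses `2(A - B) ≡ 0`).
Since `gcd(n, A, B) = 1`, this forces `n ∣ 8`. For `n = 2` or `n = 4` every residue other
than `0` is one of `n/2, ±n/4`, so failure of both (ρ.0) and (ρ.1) would give `n ∣ A` and
`n ∣ B`, contradicting `gcd(n, A, B) = 1`; hence `n = 8`.
-/

theorem halfMod.dvd_two_mul {n c : ℤ} (h : halfMod n c) : n ∣ 2 * c := by
  obtain ⟨h2, hc⟩ := h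
  have hn : 2 * (n / 2) = n := Int.mul_ediv_cancel' h2
  simpa [mul_sub, hn] using (hc.mul_left 2).add (dvd_refl n)

theorem dvd_eight_mul_of_beta_or_gamma {n A B : ℤ}
    (h : (n ∣ A + 3 * B ∧ n ∣ B + 3 * A) ∨ (n ∣ A + 3 * B ∧ halfMod n (A - B)) ∨
      (n ∣ B + 3 * A ∧ halfMod n (A - B))) :
    n ∣ 8 * A ∧ n ∣ 8 * B := by
  rcases h with ⟨h0, h1⟩ | ⟨h0, hγ⟩ | ⟨h1, hγ⟩
  · exact ⟨(h1.linear_comb h0 3 (-1)).trans (dvd_of_eq (by ring)),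
      (h0.linear_comb h1 3 (-1)).trans (dvd_of_eq (by ring))⟩
  · have hγ := hγ.dvd_two_mul
    exact ⟨(h0.linear_comb hγ 2 3).trans (dvd_of_eq (by ring)),
      (h0.linear_comb hγ 2 (-1)).trans (dvd_of_eq (by ring))⟩
  · have hγ := hγ.dvd_two_mul
    exact ⟨(h1.linear_comb hγ 2 1).trans (dvd_of_eq (by ring)),
      (h1.linear_comb hγ 2 (-3)).trans (dvd_of_eq (by ring))⟩

theorem dvd_of_gcd_gcd_eq_one {n c m k : ℤ} (h : Int.gcd n (Int.gcd m k) = 1)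
    (hm : n ∣ c * m) (hk : n ∣ c * k) : n ∣ c := by
  have hcop : IsCoprime n (Int.gcd m k) := Int.isCoprime_iff_gcd_eq_one.mpr h
  refine hcop.dvd_of_dvd_mul_right ?_
  rw [Int.gcd_eq_gcd_ab m k, mul_add, ← mul_assoc, ← mul_assoc]
  exact dvd_add (hm.mul_right _) (hk.mul_right _)

theorem two_dvd_of_not_condRho_two {c : ℤ} (h : ¬ condRho 2 c) : 2 ∣ c := by
  by_contra hc
  exact h (Or.inl ⟨by norm_num, by norm_num; omega⟩)

theorem four_dvd_of_not_condRho_four {c : ℤ} (h : ¬ condRho 4 c) : 4 ∣ c := by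
  by_contra hc
  have : (4 : ℤ) ∣ c - 2 ∨ (4 : ℤ) ∣ c - 1 ∨ (4 : ℤ) ∣ c + 1 := by omega
  rcases this with hhalf | hquarter
  · exact h (Or.inl ⟨by norm_num, by norm_num; exact hhalf⟩)
  · exact h (Or.inr (Or.inr (Or.inl ⟨by norm_num, by norm_num; exact hquarter⟩)))

theorem stmt15 (n : ℕ) (hn : 2 ≤ n) (m k : ℤ)
    (hgcd : Int.gcd (n : ℤ) ((Int.gcd m k : ℤ)) = 1)
    -- (β+.0) and (β+.1), or (β+.0) and (γ−), or (β+.1) and (γ−)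
    (h : ((n : ℤ) ∣ (k + 3 * (k - m)) ∧ (n : ℤ) ∣ ((k - m) + 3 * k)) ∨
         ((n : ℤ) ∣ (k + 3 * (k - m)) ∧ halfMod n (k - (k - m))) ∨
         ((n : ℤ) ∣ ((k - m) + 3 * k) ∧ halfMod n (k - (k - m)))) :
    n ∣ 8 ∧ ((¬ condRho (n : ℤ) (k - m) ∧ ¬ condRho (n : ℤ) k) → n = 8) := by
  have hdvd {c : ℤ} (hc : (n : ℤ) ∣ c * k) (hcB : (n : ℤ) ∣ c * (k - m)) :
      (n : ℤ) ∣ c :=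
    dvd_of_gcd_gcd_eq_one hgcd ((hc.sub hcB).trans (dvd_of_eq (by ring))) hc
  obtain ⟨h8A, h8B⟩ := dvd_eight_mul_of_beta_or_gamma h
  have h8 : n ∣ 8 := by exact_mod_cast hdvd h8A h8B
  refine ⟨h8, fun ⟨hB, hA⟩ => ?_⟩
  have hnot_dvd : ¬ ((n : ℤ) ∣ k ∧ (n : ℤ) ∣ k - m) := fun ⟨hk, hkm⟩ => by
    have h1 : n ∣ 1 := by exact_mod_cast hdvd (c := 1) (by simpa using hk) (by simpa using hkm)
    have := Nat.dvd_one.mp h1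
    omega
  have : n = 2 ∨ n = 4 ∨ n = 8 := by
    have := Nat.le_of_dvd (by norm_num) h8
    interval_cases n <;> simp_all
  rcases this with rfl | rfl | rfl
  · exact absurd ⟨two_dvd_of_not_condRho_two hA, two_dvd_of_not_condRho_two hB⟩ hnot_dvd
  · exact absurd ⟨four_dvd_of_not_condRho_four hA, four_dvd_of_not_condRho_four hB⟩ hnot_dvd
  · rfl
end

section
/- Let n ≥ 2 and m, k be integers with gcd(n, m, k) = 1; set A = k and B = k − m. If (β+.0) and (β−.1) both hold, or (β+.1) and (β−.0) both hold, then n divides 10; if moreover neither (ρ.0) nor (ρ.1) holds, then n = 10. -/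
/-!
Each pair of β-congruences yields 10A ≡ 10B ≡ 0 (mod n) by a linear combination, so n ∣ 10
because gcd(n, A, B) = 1. For n = 2 and n = 5 every nonzero residue is one of the values listed
in (ρ), so if (ρ) fails for both A and B then n divides A and B, again contradicting the gcd.
-/

lemma dvd_of_not_condRho {n c : ℤ} (hn : n = 2 ∨ n = 5) (h : ¬condRho n c) : n ∣ c := by
  rcases hn with rfl | rfl
  · norm_num [condRho, halfMod, pmMod, pm2n5Mod] at h
    omega
  · norm_num [condRho, halfMod, pmMod, pm2n5Mod] at h
    omega

lemma Int.dvd_of_dvd_mul_of_gcd_gcd_eq_one_s16 {n a b c : ℤ} (hgcd : Int.gcd n (Int.gcd a b) = 1)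
    (ha : n ∣ c * a) (hb : n ∣ c * b) : n ∣ c := by
  have hcop : IsCoprime n (Int.gcd a b) := Int.isCoprime_iff_gcd_eq_one.mpr hgcd
  refine hcop.dvd_of_dvd_mul_right ((dvd_abs n _).mp ?_)
  rw [abs_mul, Nat.abs_cast, ← Int.natCast_natAbs, ← Nat.cast_mul, ← Int.gcd_mul_left]
  exact Int.dvd_coe_gcd ha hb

lemma dvd_ten_mul_of_dvd_add_three_mul_of_dvd_sub_three_mul {R : Type*} [CommRing R] {d a b : R}
    (h₁ : d ∣ a + 3 * b) (h₂ : d ∣ b - 3 * a) : d ∣ 10 * a ∧ d ∣ 10 * b := by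
  constructor
  · convert h₁.sub (h₂.mul_left 3) using 1; ring
  · convert (h₁.mul_left 3).add h₂ using 1; ring

theorem stmt16 (n : ℕ) (hn : 2 ≤ n) (m k : ℤ)
    (hgcd : Int.gcd (n : ℤ) ((Int.gcd m k : ℤ)) = 1)
    -- (β+.0) and (β−.1), or (β+.1) and (β−.0)
    (h : ((n : ℤ) ∣ (k + 3 * (k - m)) ∧ (n : ℤ) ∣ ((k - m) - 3 * k)) ∨
         ((n : ℤ) ∣ ((k - m) + 3 * k) ∧ (n : ℤ) ∣ (k - 3 * (k - m)))) :
    n ∣ 10 ∧ ((¬ condRho (n : ℤ) (k - m) ∧ ¬ condRho (n : ℤ) k) → n = 10) := by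
  obtain ⟨hA, hB⟩ : (n : ℤ) ∣ 10 * k ∧ (n : ℤ) ∣ 10 * (k - m) := by
    rcases h with ⟨h₁, h₂⟩ | ⟨h₁, h₂⟩
    · exact dvd_ten_mul_of_dvd_add_three_mul_of_dvd_sub_three_mul h₁ h₂
    · exact (dvd_ten_mul_of_dvd_add_three_mul_of_dvd_sub_three_mul h₁ h₂).symm
  have hm : (n : ℤ) ∣ 10 * m := by simpa [mul_sub] using hA.sub hB
  have h10 : n ∣ 10 := by exact_mod_cast Int.dvd_of_dvd_mul_of_gcd_gcd_eq_one_s16 hgcd hm hA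
  refine ⟨h10, fun ⟨hρB, hρA⟩ => ?_⟩
  obtain h2or5 | rfl : (n = 2 ∨ n = 5) ∨ n = 10 := by
    have := Nat.le_of_dvd (by norm_num : 0 < 10) h10
    interval_cases n <;> omega
  · have hp : (n : ℤ) = 2 ∨ (n : ℤ) = 5 := by exact_mod_cast h2or5
    have hk := dvd_of_not_condRho hp hρA
    have hkm := dvd_of_not_condRho hp hρB
    have h1 : (n : ℤ) ∣ 1 := Int.dvd_of_dvd_mul_of_gcd_gcd_eq_one_s16 (c := 1) hgcd
      (by simpa using hk.sub hkm) (by simpa using hk)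
    have := Int.le_of_dvd one_pos h1
    omega
  · rfl
end

section
/- Let n ≥ 2 and m, k be integers with gcd(n, m, k) = 1; set A = k and B = k − m. If (α.0) holds together with (β+.1) or (β−.1), or if (α.1) holds together with (β+.0) or (β−.0), then n = 18. -/
/-!
Write `n = 6t`. Condition (α) gives `B ≡ ±t` and (β) gives `3A ≡ ∓B`, so `3A ≡ ±t (mod 6t)`.
Reducing mod 3 shows `3 ∣ t`; with `t = 3u` this becomes `A ≡ ±u (mod 6u)`, so `u` divides
`n = 18u`, `A` and `B`, and coprimality forces `u = 1`.
-/

namespace pmMod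

variable {n p c d : ℤ}

theorem div_dvd (h : pmMod n p c) : n / p ∣ c := by
  obtain ⟨hp, hc | hc⟩ := h
  · simpa using dvd_add ((Int.ediv_dvd_of_dvd hp).trans hc) (dvd_refl (n / p))
  · simpa using dvd_sub ((Int.ediv_dvd_of_dvd hp).trans hc) (dvd_refl (n / p))

theorem of_dvd_add_or_sub (h : pmMod n p c) (hcd : n ∣ c + d ∨ n ∣ c - d) : pmMod n p d := by
  refine ⟨h.1, ?_⟩
  obtain ⟨-, hc | hc⟩ := h <;> rcases hcd with hcd | hcd
  · right; convert Int.dvd_sub hcd hc using 1; ring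
  · left; convert Int.dvd_sub hc hcd using 1; ring
  · left; convert Int.dvd_sub hcd hc using 1; ring
  · right; convert Int.dvd_sub hc hcd using 1; ring

/-- Writing `n = 6t`, `3c ≡ ±t (mod 6t)` forces `3 ∣ t`, and then `c ≡ ±t/3 (mod 2t)`. -/
theorem eighteen_dvd_of_six_three_mul (h : pmMod n 6 (3 * c)) : 18 ∣ n ∧ n / 18 ∣ c := by
  obtain ⟨⟨t, rfl⟩, hc⟩ := h
  rw [Int.mul_ediv_cancel_left t (by norm_num)] at hc
  obtain ⟨δ, hδ, s, hs⟩ : ∃ δ : ℤ, (δ = 1 ∨ δ = -1) ∧ 6 * t ∣ 3 * c - δ * t := by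
    rcases hc with hc | hc
    · exact ⟨1, Or.inl rfl, by simpa using hc⟩
    · exact ⟨-1, Or.inr rfl, by simpa using hc⟩
  have h3 : 3 * c = t * (6 * s + δ) := by linarith
  obtain ⟨u, rfl⟩ : 3 ∣ t := by
    rcases Int.prime_three.dvd_mul.mp ⟨c, h3.symm⟩ with ht | hsδ
    · exact ht
    · rcases hδ with rfl | rfl <;> omega
  refine ⟨⟨u, by ring⟩, ?_⟩
  rw [show 6 * (3 * u) = 18 * u by ring, Int.mul_ediv_cancel_left u (by norm_num)]
  exact ⟨6 * s + δ, by linarith⟩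

end pmMod

theorem eq_eighteen_of_pmMod_six {n : ℕ} {a b : ℤ} (hb : pmMod n 6 b)
    (hab : (n : ℤ) ∣ b + 3 * a ∨ (n : ℤ) ∣ b - 3 * a) (hgcd : Int.gcd n (Int.gcd a b) = 1) :
    n = 18 := by
  obtain ⟨h18, hua⟩ := (hb.of_dvd_add_or_sub hab).eighteen_dvd_of_six_three_mul
  have hub : (n : ℤ) / 18 ∣ b :=
    (Dvd.intro_left 3 (by omega : 3 * ((n : ℤ) / 18) = n / 6)).trans hb.div_dvd
  have hu1 : (n : ℤ) / 18 ∣ 1 := by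
    simpa [hgcd] using Int.dvd_coe_gcd (Int.ediv_dvd_of_dvd h18) (Int.dvd_coe_gcd hua hub)
  have := Int.eq_one_of_dvd_one (by omega) hu1
  omega

theorem stmt17_general (n : ℕ) (m k : ℤ)
    (hgcd : Int.gcd (n : ℤ) ((Int.gcd m k : ℤ)) = 1)
    -- (α.0) with ((β+.1) or (β−.1)), or (α.1) with ((β+.0) or (β−.0))
    (h : (pmMod n 6 (k - m) ∧
            ((n : ℤ) ∣ ((k - m) + 3 * k) ∨ (n : ℤ) ∣ ((k - m) - 3 * k))) ∨
         (pmMod n 6 k ∧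
            ((n : ℤ) ∣ (k + 3 * (k - m)) ∨ (n : ℤ) ∣ (k - 3 * (k - m))))) :
    n = 18 := by
  rcases h with ⟨hB, hβ⟩ | ⟨hA, hβ⟩
  · exact eq_eighteen_of_pmMod_six hB hβ (by rwa [Int.gcd_self_sub_right, Int.gcd_comm k])
  · exact eq_eighteen_of_pmMod_six hA hβ (by rwa [Int.gcd_self_sub_left])

theorem stmt17 (n : ℕ) (hn : 2 ≤ n) (m k : ℤ)
    (hgcd : Int.gcd (n : ℤ) ((Int.gcd m k : ℤ)) = 1)
    -- (α.0) with ((β+.1) or (β−.1)), or (α.1) with ((β+.0) or (β−.0))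
    (h : (pmMod n 6 (k - m) ∧
            ((n : ℤ) ∣ ((k - m) + 3 * k) ∨ (n : ℤ) ∣ ((k - m) - 3 * k))) ∨
         (pmMod n 6 k ∧
            ((n : ℤ) ∣ (k + 3 * (k - m)) ∨ (n : ℤ) ∣ (k - 3 * (k - m))))) :
    n = 18 :=
  stmt17_general n m k hgcd h
end
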